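/- arXiv:1701.00840 — 8 statements merged into one kernel-verified Lean document; each statement's English description precedes it below -/
import Mathlib

section
/- For all complex numbers z and w and every real p ≥ 1 with p ≠ 2, min{|z|^p, |w|^p} ≤ |4 - 2·√2^p|^{-1} · |2(|z|^p + |w|^p) - (|z - w|^p + |z + w|^p)|. -/
/-!
Put `f t = t ^ (p / 2)`, `A = ‖z‖²`, `B = ‖w‖²` with `A ≤ B`, and `U = ‖z - w‖²`, `V = ‖z + w‖²`,
so that `U + V = 2 (A + B)` by the parallelogram law. For convex `f` (`p ≥ 2`), Jensen gives
`f U + f V ≥ 2 f (A + B)`, and since `(A + B, A)` majorizes `(2A, B)`,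
`f (A + B) + f A ≥ f (2A) + f B`. Together,
`2 (f A + f B) - (f U + f V) ≤ 4 f A - 2 f (2A) = (4 - 2 √2 ^ p) ‖z‖ ^ p`,
and for concave `f` (`p ≤ 2`) every inequality is reversed. In both cases the defect has the sign
of `4 - 2 √2 ^ p` and absolute value at least `|4 - 2 √2 ^ p| ‖z‖ ^ p`.
-/

open Real Set

theorem ConvexOn.map_add_map_le_of_add_eq {s : Set ℝ} {f : ℝ → ℝ} (hf : ConvexOn ℝ s f)
    {a d x y : ℝ} (ha : a ∈ s) (hd : d ∈ s) (hax : a ≤ x) (hxd : x ≤ d) (hsum : x + y = a + d) :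
    f x + f y ≤ f a + f d := by
  obtain rfl : y = a + d - x := by linarith
  rcases hax.eq_or_lt with rfl | hax
  · simp
  have hda : 0 < d - a := by linarith
  set t := (x - a) / (d - a)
  have ht₀ : 0 ≤ t := div_nonneg (by linarith) hda.le
  have ht₁ : 0 ≤ 1 - t := by rw [sub_nonneg]; exact div_le_one_of_le₀ (by linarith) hda.le
  have hx : (1 - t) • a + t • d = x := by simp only [smul_eq_mul, t]; field_simp; ring
  have hy : t • a + (1 - t) • d = a + d - x := by simp only [smul_eq_mul, t]; field_simp; ring
  have h₁ := hf.2 ha hd ht₁ ht₀ (by ring)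
  have h₂ := hf.2 ha hd ht₀ ht₁ (by ring)
  rw [hx] at h₁
  rw [hy] at h₂
  simp only [smul_eq_mul] at h₁ h₂
  linarith

theorem ConvexOn.two_mul_add_sub_le {f : ℝ → ℝ} (hf : ConvexOn ℝ (Ici 0) f) {A B U V : ℝ}
    (hA : 0 ≤ A) (hAB : A ≤ B) (hU : 0 ≤ U) (hV : 0 ≤ V) (hUV : U + V = 2 * (A + B)) :
    2 * (f A + f B) - (f U + f V) ≤ 4 * f A - 2 * f (2 * A) := by
  have hjensen : 2 * f (A + B) ≤ f U + f V := by
    have := hf.2 (mem_Ici.2 hU) (mem_Ici.2 hV) (by norm_num : (0 : ℝ) ≤ 1 / 2)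
      (by norm_num : (0 : ℝ) ≤ 1 / 2) (by norm_num)
    simp only [smul_eq_mul] at this
    rw [show A + B = 1 / 2 * U + 1 / 2 * V by linarith]
    linarith
  have hmajorize : f (2 * A) + f B ≤ f A + f (A + B) :=
    hf.map_add_map_le_of_add_eq (mem_Ici.2 hA) (mem_Ici.2 (by linarith)) (by linarith)
      (by linarith) (by ring)
  linarith

theorem ConcaveOn.le_two_mul_add_sub {f : ℝ → ℝ} (hf : ConcaveOn ℝ (Ici 0) f) {A B U V : ℝ}
    (hA : 0 ≤ A) (hAB : A ≤ B) (hU : 0 ≤ U) (hV : 0 ≤ V) (hUV : U + V = 2 * (A + B)) :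
    4 * f A - 2 * f (2 * A) ≤ 2 * (f A + f B) - (f U + f V) := by
  have := hf.neg.two_mul_add_sub_le hA hAB hU hV hUV
  simp only [Pi.neg_apply] at this
  linarith

theorem abs_four_sub_two_mul_two_rpow_mul_rpow_le {p A B U V : ℝ} (hp : 0 ≤ p) (hA : 0 ≤ A)
    (hAB : A ≤ B) (hU : 0 ≤ U) (hV : 0 ≤ V) (hUV : U + V = 2 * (A + B)) :
    |4 - 2 * 2 ^ p| * A ^ p ≤ |2 * (A ^ p + B ^ p) - (U ^ p + V ^ p)| := by
  have hdouble : (2 * A) ^ p = 2 ^ p * A ^ p := mul_rpow zero_le_two hA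
  have hAp : 0 ≤ A ^ p := rpow_nonneg hA p
  rcases le_total p 1 with hp₁ | hp₁
  · have hc : 0 ≤ 4 - 2 * (2 : ℝ) ^ p := by
      have : (2 : ℝ) ^ p ≤ 2 ^ (1 : ℝ) := rpow_le_rpow_of_exponent_le one_le_two hp₁
      rw [rpow_one] at this
      linarith
    have hdefect := (concaveOn_rpow hp hp₁).le_two_mul_add_sub hA hAB hU hV hUV
    rw [hdouble] at hdefect
    rw [abs_of_nonneg hc]
    exact le_abs.2 (Or.inl (by linarith))
  · have hc : 4 - 2 * (2 : ℝ) ^ p ≤ 0 := by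
      have : (2 : ℝ) ^ (1 : ℝ) ≤ 2 ^ p := rpow_le_rpow_of_exponent_le one_le_two hp₁
      rw [rpow_one] at this
      linarith
    have hdefect := (convexOn_rpow hp₁).two_mul_add_sub_le hA hAB hU hV hUV
    rw [hdouble] at hdefect
    rw [abs_of_nonpos hc]
    exact le_abs.2 (Or.inr (by linarith))

theorem abs_four_sub_two_mul_sqrt_two_rpow_mul_min_le {E : Type*} [NormedAddCommGroup E]
    [InnerProductSpace ℝ E] {p : ℝ} (hp : 0 ≤ p) (x y : E) :
    |4 - 2 * √2 ^ p| * min (‖x‖ ^ p) (‖y‖ ^ p) ≤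
      |2 * (‖x‖ ^ p + ‖y‖ ^ p) - (‖x - y‖ ^ p + ‖x + y‖ ^ p)| := by
  wlog hxy : ‖x‖ ≤ ‖y‖ generalizing x y
  · have := this y x (le_of_not_ge hxy)
    rwa [min_comm, norm_sub_rev, add_comm y x, add_comm (‖y‖ ^ p)] at this
  have hsq_rpow : ∀ t : ℝ, 0 ≤ t → (t ^ 2) ^ (p / 2) = t ^ p := fun t ht => by
    rw [rpow_div_two_eq_sqrt p (sq_nonneg t), sqrt_sq ht]
  have hparallelogram : ‖x - y‖ ^ 2 + ‖x + y‖ ^ 2 = 2 * (‖x‖ ^ 2 + ‖y‖ ^ 2) := by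
    have := parallelogram_law_with_norm ℝ x y
    nlinarith
  have hsquares := abs_four_sub_two_mul_two_rpow_mul_rpow_le (by positivity : 0 ≤ p / 2)
    (sq_nonneg ‖x‖) (pow_le_pow_left₀ (norm_nonneg x) hxy 2) (sq_nonneg ‖x - y‖)
    (sq_nonneg ‖x + y‖) hparallelogram
  simp only [hsq_rpow _ (norm_nonneg _)] at hsquares
  rw [rpow_div_two_eq_sqrt p zero_le_two] at hsquares
  rwa [min_eq_left (rpow_le_rpow (norm_nonneg x) hxy hp)]

theorem stmt2 (p : ℝ) (hp : 1 ≤ p) (hp2 : p ≠ 2) (z w : ℂ) :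
    min (‖z‖ ^ p) (‖w‖ ^ p) ≤
      |4 - 2 * Real.sqrt 2 ^ p|⁻¹ *
        |2 * (‖z‖ ^ p + ‖w‖ ^ p) -
          (‖z - w‖ ^ p + ‖z + w‖ ^ p)| := by
  have hsqrt_two : √2 ^ p ≠ √2 ^ (2 : ℝ) := fun h =>
    hp2 ((rpow_right_inj (by positivity) (by norm_num)).1 h)
  rw [rpow_two, sq_sqrt zero_le_two] at hsqrt_two
  have hc : 0 < |4 - 2 * √2 ^ p| := abs_pos.2 (by contrapose! hsqrt_two; linarith)
  rw [le_inv_mul_iff₀ hc]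
  exact abs_four_sub_two_mul_sqrt_two_rpow_mul_min_le (by linarith) z w
end

section
/- For every real p with 1 ≤ p < 2 and all complex numbers z, w, we have 2|z|^p + 2|w|^p - |z+w|^p - |z-w|^p ≥ 0; and for every real p > 2 and all complex z, w, we have 2|z|^p + 2|w|^p - |z+w|^p - |z-w|^p ≤ 0. -/
/-!
Apply `t ↦ t ^ (p / 2)` to squared norms. By the parallelogram law, the mean of `‖z + w‖²` and
`‖z - w‖²` is `‖z‖² + ‖w‖²`. For `p ≤ 2` the map is concave and subadditive, so
`‖z + w‖ ^ p + ‖z - w‖ ^ p ≤ 2 (‖z‖² + ‖w‖²) ^ (p / 2) ≤ 2 (‖z‖ ^ p + ‖w‖ ^ p)`. For `p ≥ 2` it is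
convex and superadditive, and both inequalities are reversed.
-/

namespace Real

lemma rpow_eq_sq_rpow_half {x : ℝ} (hx : 0 ≤ x) (p : ℝ) : x ^ p = (x ^ 2) ^ (p / 2) := by
  rw [← rpow_natCast_mul hx, Nat.cast_ofNat, mul_div_cancel₀ _ two_ne_zero]

variable {r s t u v : ℝ}

lemma rpow_add_rpow_le_of_add_eq_two_mul (hs : 0 ≤ s) (ht : 0 ≤ t) (hu : 0 ≤ u) (hv : 0 ≤ v)
    (hr₀ : 0 ≤ r) (hr₁ : r ≤ 1) (h : s + t = 2 * (u + v)) :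
    s ^ r + t ^ r ≤ 2 * (u ^ r + v ^ r) := by
  have hmid : (1 / 2 : ℝ) • s ^ r + (1 / 2 : ℝ) • t ^ r ≤ ((1 / 2 : ℝ) • s + (1 / 2 : ℝ) • t) ^ r :=
    (concaveOn_rpow hr₀ hr₁).2 hs ht (by norm_num) (by norm_num) (by norm_num)
  have hsum : (1 / 2 : ℝ) • s + (1 / 2 : ℝ) • t = u + v := by
    simp only [smul_eq_mul]; linarith
  rw [hsum, smul_eq_mul, smul_eq_mul] at hmid
  linarith [rpow_add_le_add_rpow hu hv hr₀ hr₁]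

lemma two_mul_rpow_add_rpow_le_of_add_eq_two_mul (hs : 0 ≤ s) (ht : 0 ≤ t) (hu : 0 ≤ u)
    (hv : 0 ≤ v) (hr : 1 ≤ r) (h : s + t = 2 * (u + v)) :
    2 * (u ^ r + v ^ r) ≤ s ^ r + t ^ r := by
  have hmid : ((1 / 2 : ℝ) • s + (1 / 2 : ℝ) • t) ^ r ≤ (1 / 2 : ℝ) • s ^ r + (1 / 2 : ℝ) • t ^ r :=
    (convexOn_rpow hr).2 hs ht (by norm_num) (by norm_num) (by norm_num)
  have hsum : (1 / 2 : ℝ) • s + (1 / 2 : ℝ) • t = u + v := by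
    simp only [smul_eq_mul]; linarith
  rw [hsum, smul_eq_mul, smul_eq_mul] at hmid
  linarith [add_rpow_le_rpow_add hu hv hr]

end Real

section InnerProductSpace

variable {E : Type*} [NormedAddCommGroup E] [InnerProductSpace ℝ E] {p : ℝ}

lemma sq_norm_add_add_sq_norm_sub (x y : E) :
    ‖x + y‖ ^ 2 + ‖x - y‖ ^ 2 = 2 * (‖x‖ ^ 2 + ‖y‖ ^ 2) := by
  simpa only [sq] using parallelogram_law_with_norm ℝ x y

lemma norm_add_rpow_add_norm_sub_rpow_le (x y : E) (hp₀ : 0 ≤ p) (hp₂ : p ≤ 2) :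
    ‖x + y‖ ^ p + ‖x - y‖ ^ p ≤ 2 * (‖x‖ ^ p + ‖y‖ ^ p) := by
  simp only [Real.rpow_eq_sq_rpow_half (norm_nonneg _) p]
  exact Real.rpow_add_rpow_le_of_add_eq_two_mul (by positivity) (by positivity) (by positivity)
    (by positivity) (by positivity) (by linarith) (sq_norm_add_add_sq_norm_sub x y)

lemma two_mul_norm_rpow_add_norm_rpow_le (x y : E) (hp : 2 ≤ p) :
    2 * (‖x‖ ^ p + ‖y‖ ^ p) ≤ ‖x + y‖ ^ p + ‖x - y‖ ^ p := by
  simp only [Real.rpow_eq_sq_rpow_half (norm_nonneg _) p]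
  exact Real.two_mul_rpow_add_rpow_le_of_add_eq_two_mul (by positivity) (by positivity)
    (by positivity) (by positivity) (by linarith) (sq_norm_add_add_sq_norm_sub x y)

end InnerProductSpace

theorem stmt3 (p : ℝ) (z w : ℂ) :
    (1 ≤ p → p < 2 →
      0 ≤ 2 * ‖z‖ ^ p + 2 * ‖w‖ ^ p
            - ‖z + w‖ ^ p - ‖z - w‖ ^ p) ∧
    (2 < p →
      2 * ‖z‖ ^ p + 2 * ‖w‖ ^ p
            - ‖z + w‖ ^ p - ‖z - w‖ ^ p ≤ 0) := by
  refine ⟨fun hp₁ hp₂ => ?_, fun hp => ?_⟩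
  · linarith [norm_add_rpow_add_norm_sub_rpow_le z w (by linarith) hp₂.le]
  · linarith [two_mul_norm_rpow_add_norm_rpow_le z w hp.le]
end

section
/- Let Ω be a measure space, p ≥ 1 a real with p ≠ 2, and f, g ∈ L^p(Ω). Then f and g are disjointly supported (i.e., f(t)g(t) = 0 for almost every t) if and only if 2(‖f‖_p^p + ‖g‖_p^p) = ‖f - g‖_p^p + ‖f + g‖_p^p. -/
/-!
Write `q = p / 2` and apply `x ↦ x ^ q` to squared norms. By the parallelogram law the midpoint of
`‖a - b‖²` and `‖a + b‖²` is `‖a‖² + ‖b‖²`, so concavity (`p < 2`) or convexity (`p > 2`) of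
`x ↦ x ^ q`, followed by strict sub- resp. superadditivity on positive reals, shows that the
pointwise defect `‖a - b‖ ^ p + ‖a + b‖ ^ p - 2 (‖a‖ ^ p + ‖b‖ ^ p)` has a fixed sign and vanishes
exactly when `a = 0` or `b = 0`. Integrating, the identity of `p`-th powers of `L^p` norms says the
integral of this sign-definite function is zero, i.e. it vanishes almost everywhere.
-/

open MeasureTheory

namespace Real

lemma rpow_eq_mul_rpow_sub_one {x : ℝ} (hx : 0 < x) (q : ℝ) : x ^ q = x * x ^ (q - 1) := by
  rw [rpow_sub_one hx.ne', mul_div_cancel₀ _ hx.ne']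

lemma rpow_add_lt_add_rpow {q A B : ℝ} (hA : 0 < A) (hB : 0 < B) (hq : q < 1) :
    (A + B) ^ q < A ^ q + B ^ q := by
  have hAB : 0 < A + B := add_pos hA hB
  have h₁ : (A + B) ^ (q - 1) < A ^ (q - 1) := rpow_lt_rpow_of_neg hA (by linarith) (by linarith)
  have h₂ : (A + B) ^ (q - 1) < B ^ (q - 1) := rpow_lt_rpow_of_neg hB (by linarith) (by linarith)
  rw [rpow_eq_mul_rpow_sub_one hA, rpow_eq_mul_rpow_sub_one hB, rpow_eq_mul_rpow_sub_one hAB,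
    add_mul]
  gcongr

lemma add_rpow_lt_rpow_add {q A B : ℝ} (hA : 0 < A) (hB : 0 < B) (hq : 1 < q) :
    A ^ q + B ^ q < (A + B) ^ q := by
  have hAB : 0 < A + B := add_pos hA hB
  have h₁ : A ^ (q - 1) < (A + B) ^ (q - 1) := rpow_lt_rpow hA.le (by linarith) (by linarith)
  have h₂ : B ^ (q - 1) < (A + B) ^ (q - 1) := rpow_lt_rpow hB.le (by linarith) (by linarith)
  rw [rpow_eq_mul_rpow_sub_one hA, rpow_eq_mul_rpow_sub_one hB, rpow_eq_mul_rpow_sub_one hAB,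
    add_mul]
  gcongr

end Real

section Pointwise

variable {E : Type*} [NormedAddCommGroup E] {p : ℝ}

noncomputable def parallelogramDefect (p : ℝ) (a b : E) : ℝ :=
  ‖a - b‖ ^ p + ‖a + b‖ ^ p - 2 * (‖a‖ ^ p + ‖b‖ ^ p)

lemma parallelogramDefect_eq_zero_of_eq_zero_or (hp : p ≠ 0) {a b : E} (h : a = 0 ∨ b = 0) :
    parallelogramDefect p a b = 0 := by
  rcases h with rfl | rfl <;>
    simp only [parallelogramDefect, zero_sub, sub_zero, norm_neg, zero_add, add_zero, norm_zero,
      Real.zero_rpow hp] <;> ring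

lemma parallelogramDefect_eq_sq_rpow (p : ℝ) (a b : E) :
    parallelogramDefect p a b = (‖a - b‖ ^ 2) ^ (p / 2) + (‖a + b‖ ^ 2) ^ (p / 2)
      - 2 * ((‖a‖ ^ 2) ^ (p / 2) + (‖b‖ ^ 2) ^ (p / 2)) := by
  have h : ∀ x : ℝ, 0 ≤ x → x ^ p = (x ^ 2) ^ (p / 2) := fun x hx => by
    rw [← Real.rpow_natCast_mul hx, Nat.cast_ofNat, mul_div_cancel₀ p two_ne_zero]
  simp only [parallelogramDefect, h _ (norm_nonneg _)]

variable [InnerProductSpace ℝ E]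

lemma half_mul_sq_norm_sub_add_half_mul_sq_norm_add (a b : E) :
    1 / 2 * ‖a - b‖ ^ 2 + 1 / 2 * ‖a + b‖ ^ 2 = ‖a‖ ^ 2 + ‖b‖ ^ 2 := by
  linarith [parallelogram_law_with_norm ℝ a b]

lemma parallelogramDefect_neg (hp₀ : 0 < p) (hp₂ : p < 2) {a b : E} (ha : a ≠ 0) (hb : b ≠ 0) :
    parallelogramDefect p a b < 0 := by
  have ha' : 0 < ‖a‖ ^ 2 := by positivity
  have hb' : 0 < ‖b‖ ^ 2 := by positivity
  have hmid := (Real.concaveOn_rpow (p := p / 2) (by positivity) (by linarith)).2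
    (sq_nonneg ‖a - b‖) (sq_nonneg ‖a + b‖) (by norm_num : (0:ℝ) ≤ 1 / 2)
    (by norm_num : (0:ℝ) ≤ 1 / 2) (by norm_num)
  simp only [smul_eq_mul, half_mul_sq_norm_sub_add_half_mul_sq_norm_add] at hmid
  have hsub := Real.rpow_add_lt_add_rpow ha' hb' (q := p / 2) (by linarith)
  rw [parallelogramDefect_eq_sq_rpow]
  linarith

lemma parallelogramDefect_pos (hp₂ : 2 < p) {a b : E} (ha : a ≠ 0) (hb : b ≠ 0) :
    0 < parallelogramDefect p a b := by
  have ha' : 0 < ‖a‖ ^ 2 := by positivity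
  have hb' : 0 < ‖b‖ ^ 2 := by positivity
  have hmid := (convexOn_rpow (p := p / 2) (by linarith)).2
    (sq_nonneg ‖a - b‖) (sq_nonneg ‖a + b‖) (by norm_num : (0:ℝ) ≤ 1 / 2)
    (by norm_num : (0:ℝ) ≤ 1 / 2) (by norm_num)
  simp only [smul_eq_mul, half_mul_sq_norm_sub_add_half_mul_sq_norm_add] at hmid
  have hsup := Real.add_rpow_lt_rpow_add ha' hb' (q := p / 2) (by linarith)
  rw [parallelogramDefect_eq_sq_rpow]
  linarith

lemma parallelogramDefect_eq_zero_iff (hp₀ : 0 < p) (hp₂ : p ≠ 2) {a b : E} :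
    parallelogramDefect p a b = 0 ↔ a = 0 ∨ b = 0 := by
  refine ⟨fun h => ?_, parallelogramDefect_eq_zero_of_eq_zero_or hp₀.ne'⟩
  by_contra! hab
  rcases hp₂.lt_or_gt with hlt | hgt
  · exact (parallelogramDefect_neg hp₀ hlt hab.1 hab.2).ne h
  · exact (parallelogramDefect_pos hgt hab.1 hab.2).ne' h

lemma parallelogramDefect_nonpos_or_nonneg (hp₀ : 0 < p) (hp₂ : p ≠ 2) :
    (∀ a b : E, parallelogramDefect p a b ≤ 0) ∨ ∀ a b : E, 0 ≤ parallelogramDefect p a b := by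
  rcases hp₂.lt_or_gt with hlt | hgt
  · refine .inl fun a b => ?_
    by_cases hab : a = 0 ∨ b = 0
    · exact (parallelogramDefect_eq_zero_of_eq_zero_or hp₀.ne' hab).le
    · obtain ⟨ha, hb⟩ := not_or.1 hab
      exact (parallelogramDefect_neg hp₀ hlt ha hb).le
  · refine .inr fun a b => ?_
    by_cases hab : a = 0 ∨ b = 0
    · exact (parallelogramDefect_eq_zero_of_eq_zero_or hp₀.ne' hab).ge
    · obtain ⟨ha, hb⟩ := not_or.1 hab
      exact (parallelogramDefect_pos hgt ha hb).le

end Pointwise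

section Integral

variable {X : Type*} [MeasurableSpace X] {μ : Measure X}

lemma integral_eq_zero_iff_of_nonpos_or_nonneg {D : X → ℝ} (hD : Integrable D μ)
    (h : D ≤ 0 ∨ 0 ≤ D) : ∫ t, D t ∂μ = 0 ↔ D =ᵐ[μ] 0 := by
  rcases h with h | h
  · have := integral_eq_zero_iff_of_nonneg (neg_nonneg.2 h) hD.neg
    simpa only [Pi.neg_apply, integral_neg, neg_eq_zero, Filter.EventuallyEq, Pi.zero_apply]
      using this
  · exact integral_eq_zero_iff_of_nonneg h hD

variable {E : Type*} [NormedAddCommGroup E] {p : ℝ} {f g : X → E}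

lemma MeasureTheory.MemLp.integrable_norm_rpow_ofReal (hp : 0 < p)
    (hf : MemLp f (ENNReal.ofReal p) μ) : Integrable (fun t => ‖f t‖ ^ p) μ := by
  simpa [ENNReal.toReal_ofReal hp.le] using
    hf.integrable_norm_rpow (by simpa using hp) ENNReal.ofReal_ne_top

lemma integrable_parallelogramDefect (hp : 0 < p) (hf : MemLp f (ENNReal.ofReal p) μ)
    (hg : MemLp g (ENNReal.ofReal p) μ) :
    Integrable (fun t => parallelogramDefect p (f t) (g t)) μ :=
  ((hf.sub hg).integrable_norm_rpow_ofReal hp |>.add <|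
    (hf.add hg).integrable_norm_rpow_ofReal hp).sub <|
    ((hf.integrable_norm_rpow_ofReal hp).add (hg.integrable_norm_rpow_ofReal hp)).const_mul 2

lemma integral_parallelogramDefect (hp : 0 < p) (hf : MemLp f (ENNReal.ofReal p) μ)
    (hg : MemLp g (ENNReal.ofReal p) μ) :
    ∫ t, parallelogramDefect p (f t) (g t) ∂μ =
      (∫ t, ‖f t - g t‖ ^ p ∂μ) + (∫ t, ‖f t + g t‖ ^ p ∂μ)
        - 2 * ((∫ t, ‖f t‖ ^ p ∂μ) + ∫ t, ‖g t‖ ^ p ∂μ) := by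
  have hf' := hf.integrable_norm_rpow_ofReal hp
  have hg' := hg.integrable_norm_rpow_ofReal hp
  have hsub : Integrable (fun t => ‖f t - g t‖ ^ p) μ := (hf.sub hg).integrable_norm_rpow_ofReal hp
  have hadd : Integrable (fun t => ‖f t + g t‖ ^ p) μ := (hf.add hg).integrable_norm_rpow_ofReal hp
  have hsum : Integrable (fun t => ‖f t - g t‖ ^ p + ‖f t + g t‖ ^ p) μ := hsub.add hadd
  have hsum' : Integrable (fun t => 2 * (‖f t‖ ^ p + ‖g t‖ ^ p)) μ := (hf'.add hg').const_mul 2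
  simp only [parallelogramDefect]
  rw [integral_sub hsum hsum', integral_add hsub hadd, integral_const_mul, integral_add hf' hg']

end Integral

theorem ae_eq_zero_or_eq_zero_iff_integral_norm_rpow {X E : Type*} [MeasurableSpace X] {μ : Measure X}
    [NormedAddCommGroup E] [InnerProductSpace ℝ E] {p : ℝ} (hp₀ : 0 < p) (hp₂ : p ≠ 2)
    {f g : X → E} (hf : MemLp f (ENNReal.ofReal p) μ) (hg : MemLp g (ENNReal.ofReal p) μ) :
    (∀ᵐ t ∂μ, f t = 0 ∨ g t = 0) ↔
      2 * ((∫ t, ‖f t‖ ^ p ∂μ) + ∫ t, ‖g t‖ ^ p ∂μ) =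
        (∫ t, ‖f t - g t‖ ^ p ∂μ) + ∫ t, ‖f t + g t‖ ^ p ∂μ := by
  have hsign : (fun t => parallelogramDefect p (f t) (g t)) ≤ 0 ∨
      0 ≤ fun t => parallelogramDefect p (f t) (g t) :=
    (parallelogramDefect_nonpos_or_nonneg hp₀ hp₂).imp (fun h t => h _ _) (fun h t => h _ _)
  rw [eq_comm, ← sub_eq_zero, ← integral_parallelogramDefect hp₀ hf hg,
    integral_eq_zero_iff_of_nonpos_or_nonneg (integrable_parallelogramDefect hp₀ hf hg) hsign]
  exact Filter.eventually_congr <| .of_forall fun t => (parallelogramDefect_eq_zero_iff hp₀ hp₂).symm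

theorem stmt4 {X : Type*} [MeasurableSpace X] (μ : Measure X) (p : ℝ)
    (hp : 1 ≤ p) (hp2 : p ≠ 2) (f g : X → ℂ)
    (hf : MemLp f (ENNReal.ofReal p) μ) (hg : MemLp g (ENNReal.ofReal p) μ) :
    (∀ᵐ t ∂μ, f t * g t = 0) ↔
      2 * ((∫ t, ‖f t‖ ^ p ∂μ) + ∫ t, ‖g t‖ ^ p ∂μ) =
        (∫ t, ‖f t - g t‖ ^ p ∂μ) + ∫ t, ‖f t + g t‖ ^ p ∂μ := by
  simpa only [mul_eq_zero] using ae_eq_zero_or_eq_zero_iff_integral_norm_rpow (by linarith) hp2 hf hg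
end

section
/- Let Ω be a measure space, p ≥ 1, and let {f_n} be a sequence in L^p(Ω) such that f_{n+1} is a subvector of f_n for all n (i.e., f_{n+1}(t) = f_n(t) for almost every t with f_{n+1}(t) ≠ 0). Then {f_n} converges pointwise almost everywhere and in the L^p norm. -/
/-!
At almost every point `t` the scalar sequence `fₙ(t)` keeps the value `f₀(t)` until it
possibly drops to `0`, after which it stays `0`. Hence it is eventually constant, with a limit
`g(t)` such that `|fₙ(t) - g(t)| ≤ |f₀(t)|` for all `n`, and dominated convergence in `Lᵖ`,
with dominating function `f₀`, gives convergence in norm.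
-/

open MeasureTheory Filter Topology
open scoped ENNReal

/-- Pointwise form of the subvector chain `a 0 ⪰ a 1 ⪰ ⋯`. -/
def IsSubvectorSeq {E : Type*} [Zero E] (a : ℕ → E) : Prop :=
  ∀ n, a (n + 1) ≠ 0 → a (n + 1) = a n

namespace IsSubvectorSeq

variable {E : Type*} {a : ℕ → E}

lemma eq_zero_of_le [Zero E] (h : IsSubvectorSeq a) {N n : ℕ} (hN : a N = 0) (hn : N ≤ n) :
    a n = 0 := by
  induction n, hn using Nat.le_induction with
  | base => exact hN
  | succ m _ ih => exact not_not.1 fun hne => hne ((h m hne).trans ih)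

lemma apply_eq_apply_zero_of_forall_ne_zero [Zero E] (h : IsSubvectorSeq a)
    (hne : ∀ n, a n ≠ 0) (n : ℕ) : a n = a 0 := by
  induction n with
  | zero => rfl
  | succ m ih => rw [h m (hne (m + 1)), ih]

lemma exists_eventually_eq [Zero E] (h : IsSubvectorSeq a) :
    ∃ L, (∀ᶠ n in atTop, a n = L) ∧ ∀ n, a n = L ∨ L = 0 := by
  by_cases hz : ∃ N, a N = 0
  · obtain ⟨N, hN⟩ := hz
    exact ⟨0, eventually_atTop.2 ⟨N, fun n => h.eq_zero_of_le hN⟩, fun _ => Or.inr rfl⟩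
  · push Not at hz
    have hconst := h.apply_eq_apply_zero_of_forall_ne_zero hz
    exact ⟨a 0, .of_forall hconst, fun n => Or.inl (hconst n)⟩

lemma norm_le_norm_zero [SeminormedAddGroup E] (h : IsSubvectorSeq a) (n : ℕ) :
    ‖a n‖ ≤ ‖a 0‖ := by
  induction n with
  | zero => exact le_rfl
  | succ m ih =>
    by_cases hne : a (m + 1) = 0
    · simp [hne]
    · rwa [h m hne]

lemma exists_tendsto_and_norm_sub_le [SeminormedAddGroup E] (h : IsSubvectorSeq a) :
    ∃ L, Tendsto a atTop (𝓝 L) ∧ ∀ n, ‖a n - L‖ ≤ ‖a 0‖ := by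
  obtain ⟨L, hL, hcases⟩ := h.exists_eventually_eq
  refine ⟨L, tendsto_const_nhds.congr' (hL.mono fun _ hn => hn.symm), fun n => ?_⟩
  rcases hcases n with hn | rfl
  · simp [hn]
  · simpa using h.norm_le_norm_zero n

end IsSubvectorSeq

theorem tendsto_eLpNorm_of_dominated {ι α E F : Type*} [MeasurableSpace α] {μ : Measure α}
    [NormedAddCommGroup E] [NormedAddCommGroup F] {l : Filter ι} [l.IsCountablyGenerated]
    {p : ℝ≥0∞} (hp : p ≠ ∞) {u : ι → α → E} {G : α → F}
    (hu : ∀ i, AEStronglyMeasurable (u i) μ) (hG : MemLp G p μ)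
    (hle : ∀ i, ∀ᵐ x ∂μ, ‖u i x‖ ≤ ‖G x‖) (hlim : ∀ᵐ x ∂μ, Tendsto (fun i => u i x) l (𝓝 0)) :
    Tendsto (fun i => eLpNorm (u i) p μ) l (𝓝 0) := by
  rcases eq_or_ne p 0 with rfl | hp0
  · simpa using tendsto_const_nhds
  have hpos : 0 < p.toReal := ENNReal.toReal_pos hp0 hp
  have hint : Tendsto (fun i => ∫⁻ x, ‖u i x‖ₑ ^ p.toReal ∂μ) l (𝓝 0) := by
    have := tendsto_lintegral_filter_of_dominated_convergence' (f := fun _ => 0)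
      (fun x => ‖G x‖ₑ ^ p.toReal) (.of_forall fun i => ((hu i).enorm.pow_const _))
      (.of_forall fun i => (hle i).mono fun x hx =>
        ENNReal.rpow_le_rpow (enorm_le_iff_norm_le.2 hx) hpos.le)
      (lintegral_rpow_enorm_lt_top_of_eLpNorm_lt_top hp0 hp hG.2).ne
      (hlim.mono fun x hx => by
        simpa [ENNReal.zero_rpow_of_pos hpos, Function.comp_def] using
          (ENNReal.continuous_rpow_const (y := p.toReal)).tendsto 0 |>.comp
            (by simpa using hx.enorm))
    simpa using this
  simpa [eLpNorm_eq_lintegral_rpow_enorm_toReal hp0 hp, ENNReal.zero_rpow_of_pos, hpos,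
    Function.comp_def] using
    (ENNReal.continuous_rpow_const (y := 1 / p.toReal)).tendsto 0 |>.comp hint

theorem stmt5_general {X : Type*} [MeasurableSpace X] (μ : Measure X) (p : ℝ)
    (f : ℕ → X → ℂ) (hf : ∀ n, MemLp (f n) (ENNReal.ofReal p) μ)
    (hsub : ∀ n, ∀ᵐ t ∂μ, f (n + 1) t ≠ 0 → f (n + 1) t = f n t) :
    ∃ g : X → ℂ,
      (∀ᵐ t ∂μ, Tendsto (fun n => f n t) atTop (nhds (g t))) ∧
      Tendsto (fun n => eLpNorm (f n - g) (ENNReal.ofReal p) μ) atTop (nhds 0) := by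
  set g : X → ℂ := fun t => limUnder atTop (fun n => f n t)
  have hlim : ∀ᵐ t ∂μ,
      Tendsto (fun n => f n t) atTop (𝓝 (g t)) ∧ ∀ n, ‖f n t - g t‖ ≤ ‖f 0 t‖ := by
    filter_upwards [ae_all_iff.2 hsub] with t ht
    have ht' : IsSubvectorSeq fun n => f n t := ht
    obtain ⟨L, hL, hbound⟩ := ht'.exists_tendsto_and_norm_sub_le
    rw [show g t = L from hL.limUnder_eq]
    exact ⟨hL, hbound⟩
  have hg : AEStronglyMeasurable g μ :=
    aestronglyMeasurable_of_tendsto_ae atTop (fun n => (hf n).1) (hlim.mono fun _ h => h.1)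
  refine ⟨g, hlim.mono fun _ h => h.1, ?_⟩
  refine tendsto_eLpNorm_of_dominated ENNReal.ofReal_ne_top (fun n => (hf n).1.sub hg) (hf 0)
    (fun n => hlim.mono fun _ h => h.2 n) ?_
  filter_upwards [hlim] with t ht
  simpa using ht.1.sub_const (g t)

theorem stmt5 {X : Type*} [MeasurableSpace X] (μ : Measure X) (p : ℝ) (hp : 1 ≤ p)
    (f : ℕ → X → ℂ) (hf : ∀ n, MemLp (f n) (ENNReal.ofReal p) μ)
    (hsub : ∀ n, ∀ᵐ t ∂μ, f (n + 1) t ≠ 0 → f (n + 1) t = f n t) :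
    ∃ g : X → ℂ,
      (∀ᵐ t ∂μ, Tendsto (fun n => f n t) atTop (nhds (g t))) ∧
      Tendsto (fun n => eLpNorm (f n - g) (ENNReal.ofReal p) μ) atTop (nhds 0) :=
  stmt5_general μ p f hf hsub
end

section
/- Let Ω = (X, M, μ) be a measure space, 1 ≤ p < ∞, and let f ∈ L^p(Ω) be supported on a set of finite measure. Then for every ε > 0, there is a simple function s with supp(s) ⊆ supp(f) and ‖s·f - χ_{supp(f)}‖_p < ε. -/
/-!
Approximate `f⁻¹` pointwise by the standard simple functions `sₙ` with `‖sₙ - f⁻¹‖ ≤ ‖f⁻¹‖`.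
Then `sₙ f → χ_{supp f}` pointwise, `sₙ` vanishes off `supp f`, and
`|sₙ f - χ_{supp f}| ≤ |sₙ - f⁻¹| |f| ≤ χ_{supp f}`, which lies in `Lᵖ` because `supp f` has
finite measure; dominated convergence gives `‖sₙ f - χ_{supp f}‖_p → 0`.
-/

open MeasureTheory Filter Topology ENNReal Set Function

section DominatedConvergence

variable {α E : Type*} [MeasurableSpace α] {μ : Measure α} [NormedAddCommGroup E]

theorem tendsto_eLpNorm_zero_of_dominated {q : ℝ≥0∞} (hq : q ≠ ∞) {F : ℕ → α → E}
    {g : α → ℝ} (hF : ∀ n, AEStronglyMeasurable (F n) μ) (hg : MemLp g q μ)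
    (h_bound : ∀ n, ∀ᵐ x ∂μ, ‖F n x‖ ≤ g x)
    (h_lim : ∀ᵐ x ∂μ, Tendsto (fun n => F n x) atTop (𝓝 0)) :
    Tendsto (fun n => eLpNorm (F n) q μ) atTop (𝓝 0) := by
  rcases eq_or_ne q 0 with rfl | hq0
  · simp
  have hq_pos : 0 < q.toReal := toReal_pos hq0 hq
  suffices h : Tendsto (fun n => ∫⁻ x, ‖F n x‖ₑ ^ q.toReal ∂μ) atTop (𝓝 0) by
    simp only [eLpNorm_eq_lintegral_rpow_enorm_toReal hq0 hq]
    simpa [zero_rpow_of_pos (inv_pos.mpr hq_pos), Function.comp_def] using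
      ((continuous_rpow_const (y := 1 / q.toReal)).tendsto 0).comp h
  have h_fin : ∫⁻ x, ‖g x‖ₑ ^ q.toReal ∂μ ≠ ∞ :=
    (lintegral_rpow_enorm_lt_top_of_eLpNorm_lt_top hq0 hq hg.2).ne
  have := tendsto_lintegral_of_dominated_convergence' (f := fun _ => 0) _
    (fun n => (hF n).enorm.pow_const _)
    (fun n => (h_bound n).mono fun x hx =>
      rpow_le_rpow (enorm_le_iff_norm_le.mpr (hx.trans (Real.le_norm_self _))) toReal_nonneg)
    h_fin
    (h_lim.mono fun x hx => by
      simpa [zero_rpow_of_pos hq_pos, Function.comp_def] using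
        ((continuous_rpow_const (y := q.toReal)).tendsto 0).comp (enorm_zero (E := E) ▸ hx.enorm))
  rwa [lintegral_zero] at this

end DominatedConvergence

namespace MeasureTheory.SimpleFunc

theorem norm_approxOn_zero_sub_le {α E : Type*} [MeasurableSpace α] [NormedAddCommGroup E]
    [MeasurableSpace E] [OpensMeasurableSpace E] {f : α → E} (hf : Measurable f) {s : Set E}
    (h₀ : (0 : E) ∈ s) [TopologicalSpace.SeparableSpace s] (x : α) (n : ℕ) :
    ‖approxOn f hf s 0 h₀ n x - f x‖ ≤ ‖f x‖ :=
  enorm_le_iff_norm_le.mp (by simpa [edist_eq_enorm_sub] using edist_approxOn_le hf h₀ x n)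

end MeasureTheory.SimpleFunc

section InvApprox

variable {α 𝕜 : Type*} [MeasurableSpace α] [NormedDivisionRing 𝕜] [MeasurableSpace 𝕜]
  [BorelSpace 𝕜] [SecondCountableTopology 𝕜] {f : α → 𝕜}

/-- `f⁻¹` vanishes off `support f` because `0⁻¹ = 0`. -/
noncomputable def invApprox (hf : Measurable f) (n : ℕ) : SimpleFunc α 𝕜 :=
  SimpleFunc.approxOn f⁻¹ hf.inv univ 0 (mem_univ 0) n

theorem support_invApprox_subset (hf : Measurable f) (n : ℕ) :
    support (invApprox hf n) ⊆ support f := by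
  intro x hx
  by_contra hfx
  have := SimpleFunc.norm_approxOn_zero_sub_le hf.inv (mem_univ 0) x n
  simp_all [invApprox]

theorem norm_invApprox_mul_sub_indicator_le (hf : Measurable f) (n : ℕ) (x : α) :
    ‖invApprox hf n x * f x - (support f).indicator 1 x‖ ≤ (support f).indicator 1 x := by
  by_cases hfx : f x = 0
  · have : invApprox hf n x = 0 :=
      notMem_support.mp fun hx => support_invApprox_subset hf n hx hfx
    simp [hfx, this]
  · have hx : x ∈ support f := hfx
    calc ‖invApprox hf n x * f x - (support f).indicator 1 x‖
        = ‖invApprox hf n x - (f x)⁻¹‖ * ‖f x‖ := by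
          rw [indicator_of_mem hx, Pi.one_apply, ← norm_mul, sub_mul, inv_mul_cancel₀ hfx]
      _ ≤ ‖(f x)⁻¹‖ * ‖f x‖ := by
          gcongr; exact SimpleFunc.norm_approxOn_zero_sub_le hf.inv (mem_univ 0) x n
      _ = (support f).indicator 1 x := by
          rw [indicator_of_mem hx, Pi.one_apply, ← norm_mul, inv_mul_cancel₀ hfx, norm_one]

theorem tendsto_invApprox_mul (hf : Measurable f) (x : α) :
    Tendsto (fun n => invApprox hf n x * f x) atTop (𝓝 ((support f).indicator 1 x)) := by
  by_cases hfx : f x = 0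
  · simp [hfx]
  · have h : Tendsto (fun n => invApprox hf n x) atTop (𝓝 (f x)⁻¹) :=
      SimpleFunc.tendsto_approxOn hf.inv (mem_univ 0) (by simp)
    simpa [indicator_of_mem (show x ∈ support f from hfx), inv_mul_cancel₀ hfx] using
      h.mul_const (f x)

theorem tendsto_eLpNorm_invApprox_mul_sub_indicator (hf : Measurable f) {μ : Measure α}
    {q : ℝ≥0∞} (hq : q ≠ ∞) (hμ : μ (support f) < ∞) :
    Tendsto (fun n => eLpNorm (fun x => invApprox hf n x * f x - (support f).indicator 1 x) q μ)
      atTop (𝓝 0) :=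
  tendsto_eLpNorm_zero_of_dominated hq
    (fun n => (((invApprox hf n).measurable.mul hf).sub
      (measurable_const.indicator (measurableSet_support hf))).aestronglyMeasurable)
    (memLp_indicator_const q (measurableSet_support hf) 1 (Or.inr hμ.ne))
    (fun n => .of_forall (norm_invApprox_mul_sub_indicator_le hf n))
    (.of_forall fun x => by
      simpa using (tendsto_invApprox_mul hf x).sub_const ((support f).indicator 1 x))

end InvApprox

theorem stmt6_general {X : Type*} [MeasurableSpace X] (μ : Measure X) (p : ℝ)
    (f : X → ℂ) (hfm : Measurable f)
    (hsupp : μ (Function.support f) < ⊤) (ε : ℝ) (hε : 0 < ε) :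
    ∃ s : SimpleFunc X ℂ, Function.support ⇑s ⊆ Function.support f ∧
      eLpNorm (fun t => s t * f t - (Function.support f).indicator 1 t)
        (ENNReal.ofReal p) μ < ENNReal.ofReal ε := by
  obtain ⟨n, hn⟩ := ((tendsto_eLpNorm_invApprox_mul_sub_indicator hfm ofReal_ne_top
    hsupp).eventually_lt_const (ofReal_pos.mpr hε)).exists
  exact ⟨invApprox hfm n, support_invApprox_subset hfm n, hn⟩

theorem stmt6 {X : Type*} [MeasurableSpace X] (μ : Measure X) (p : ℝ) (hp : 1 ≤ p)
    (f : X → ℂ) (hfm : Measurable f) (hf : MemLp f (ENNReal.ofReal p) μ)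
    (hsupp : μ (Function.support f) < ⊤) (ε : ℝ) (hε : 0 < ε) :
    ∃ s : SimpleFunc X ℂ, Function.support ⇑s ⊆ Function.support f ∧
      eLpNorm (fun t => s t * f t - (Function.support f).indicator 1 t)
        (ENNReal.ofReal p) μ < ENNReal.ofReal ε :=
  stmt6_general μ p f hfm hsupp ε hε
end

section
/- Let Ω be a measure space and 1 ≤ p < ∞. Suppose D ⊆ L^p(Ω) is a collection of vectors that forms a simple lower semilattice under the subvector order, such that the upper semilattice generated by the supports of the vectors in D is dense in Ω (i.e., every measurable set of finite measure can be approximated in measure of symmetric difference by finite unions of supports of elements of D). Then the linear span of D is dense in L^p(Ω). -/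
/-!
Let `V` be the closure of the span of `D` in `Lᵖ`. By induction over `Lᵖ` it suffices to show
`1_A ∈ V` for every `A` of finite measure. Simplicity makes the supports of members of `D` an
a.e. laminar family, and for such a family `1_{B ∪ C} = 1_B + 1_C - 1_{B ∩ C}` reduces the indicator
of a finite union to indicators of single members. For `g, h ∈ D`, `1_{supp h} · g` is a.e. `h`, `g`
or `0`; density of unions of supports and absolute continuity of `A ↦ ‖1_A · g‖_p` then give
`1_A · g ∈ V` for all measurable `A`. Multiplying `g` by simple approximations of `g⁻¹` and
passing to the limit by dominated convergence gives `1_{supp g} ∈ V`, and the same density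
argument with weight `1` in place of `g` gives `1_A ∈ V`.
-/

open MeasureTheory Set
open scoped symmDiff

variable {X : Type*} [MeasurableSpace X]

def Subvec (μ : Measure X) (f g : X → ℂ) : Prop :=
  ∀ᵐ t ∂μ, f t ≠ 0 → f t = g t

open Filter Topology Function
open scoped ENNReal

section Subvec

variable {μ : Measure X} {f g : X → ℂ}

lemma Subvec.indicator_support_ae_eq (h : Subvec μ f g) :
    (support f).indicator g =ᵐ[μ] f := by
  filter_upwards [h] with t ht
  by_cases hf : f t = 0
  · simp [hf]
  · simp [ht hf]

lemma Subvec.indicator_support_ae_eq_self (h : Subvec μ g f) :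
    (support f).indicator g =ᵐ[μ] g := by
  filter_upwards [h] with t ht
  by_cases hf : f t = 0
  · have hg : g t = 0 := by_contra fun hg => hg ((ht hg).trans hf)
    simp [hf, hg]
  · simp [hf]

lemma indicator_support_ae_eq_zero_of_mul (h : ∀ᵐ t ∂μ, f t * g t = 0) :
    (support f).indicator g =ᵐ[μ] 0 := by
  filter_upwards [h] with t ht
  by_cases hf : f t = 0
  · simp [hf]
  · simp [hf, (mul_eq_zero.mp ht).resolve_left hf]

lemma Subvec.support_inter_ae_eq (h : Subvec μ f g) :
    (support f ∩ support g : Set X) =ᵐ[μ] support f := by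
  rw [eventuallyEq_set]
  filter_upwards [h] with t ht
  exact ⟨fun h => h.1, fun hf => ⟨hf, mem_support.mpr (ht hf ▸ hf)⟩⟩

lemma support_inter_ae_eq_empty_of_mul (h : ∀ᵐ t ∂μ, f t * g t = 0) :
    (support f ∩ support g : Set X) =ᵐ[μ] (∅ : Set X) := by
  rw [eventuallyEq_set]
  filter_upwards [h] with t ht
  simpa using fun hf => (mul_eq_zero.mp ht).resolve_left hf

end Subvec

def IsSimple (μ : Measure X) (D : Set (X → ℂ)) : Prop :=
  ∀ f ∈ D, ∀ g ∈ D, ¬ Subvec μ f g → ¬ Subvec μ g f → ∀ᵐ t ∂μ, f t * g t = 0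

def SupportUnionsDense (μ : Measure X) (D : Set (X → ℂ)) : Prop :=
  ∀ A : Set X, MeasurableSet A → μ A < ⊤ → ∀ ε : ℝ, 0 < ε →
    ∃ (n : ℕ) (g : Fin n → (X → ℂ)), (∀ i, g i ∈ D) ∧
      μ (A ∆ (⋃ i, support (g i))) < ENNReal.ofReal ε

def AELaminar (μ : Measure X) {ι : Type*} (C : ι → Set X) : Prop :=
  ∀ i j, (C i ∩ C j : Set X) =ᵐ[μ] C i ∨ (C i ∩ C j : Set X) =ᵐ[μ] C j ∨
    (C i ∩ C j : Set X) =ᵐ[μ] (∅ : Set X)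

section Laminar

variable {μ : Measure X} {ι : Type*} {C : ι → Set X}

lemma IsSimple.trichotomy {D : Set (X → ℂ)} (hD : IsSimple μ D) {f g : X → ℂ}
    (hf : f ∈ D) (hg : g ∈ D) :
    Subvec μ f g ∨ Subvec μ g f ∨ ∀ᵐ t ∂μ, f t * g t = 0 := by
  have := hD f hf g hg
  tauto

lemma IsSimple.aeLaminar_support {D : Set (X → ℂ)} (hD : IsSimple μ D) {g : ι → X → ℂ}
    (hg : ∀ i, g i ∈ D) : AELaminar μ fun i => support (g i) := by
  intro i j
  rcases hD.trichotomy (hg i) (hg j) with h | h | h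
  · exact Or.inl h.support_inter_ae_eq
  · exact Or.inr (Or.inl (inter_comm (support (g i)) _ ▸ h.support_inter_ae_eq))
  · exact Or.inr (Or.inr (support_inter_ae_eq_empty_of_mul h))

lemma AELaminar.inter_left (hC : AELaminar μ C) (i : ι) : AELaminar μ fun j => C i ∩ C j := by
  intro j k
  simp only [← inter_inter_distrib_left]
  rcases hC j k with h | h | h
  · exact Or.inl (EventuallyEq.rfl.inter h)
  · exact Or.inr (Or.inl (EventuallyEq.rfl.inter h))
  · exact Or.inr (Or.inr (by simpa using EventuallyEq.rfl.inter h))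

theorem AELaminar.biUnion_induction {P : Set X → Prop} (h_empty : P ∅)
    (h_congr : ∀ ⦃A B⦄, A =ᵐ[μ] B → P A → P B)
    (h_union : ∀ ⦃A B⦄, P A → P B → P (A ∩ B) → P (A ∪ B))
    (hC : AELaminar μ C) (hP : ∀ i, P (C i)) (s : Finset ι) : P (⋃ i ∈ s, C i) := by
  classical
  induction s using Finset.induction_on generalizing C with
  | empty => simpa using h_empty
  | insert i s _ ih =>
    rw [Finset.set_biUnion_insert]
    refine h_union (hP i) (ih hC hP) ?_
    -- the intersection of a member with a union of members is a union of a laminar family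
    rw [inter_iUnion₂]
    refine ih (hC.inter_left i) fun j => ?_
    rcases hC i j with h | h | h
    exacts [h_congr h.symm (hP i), h_congr h.symm (hP j), h_congr h.symm h_empty]

end Laminar

section AEMem

variable {μ : Measure X} {q : ℝ≥0∞}

def AEMem (V : Submodule ℂ (Lp ℂ q μ)) (f : X → ℂ) : Prop :=
  ∃ F ∈ V, F =ᵐ[μ] f

variable {V : Submodule ℂ (Lp ℂ q μ)} {f g : X → ℂ}

lemma aeMem_coeFn_iff (F : Lp ℂ q μ) : AEMem V F ↔ F ∈ V :=
  ⟨fun ⟨_, hG, hGF⟩ => Lp.ext hGF ▸ hG, fun hF => ⟨F, hF, .rfl⟩⟩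

lemma AEMem.memLp (hf : AEMem V f) : MemLp f q μ :=
  let ⟨F, _, hF⟩ := hf
  (Lp.memLp F).ae_eq hF

lemma AEMem.congr (hf : AEMem V f) (h : f =ᵐ[μ] g) : AEMem V g :=
  let ⟨F, hFV, hF⟩ := hf
  ⟨F, hFV, hF.trans h⟩

lemma aeMem_zero : AEMem V 0 :=
  ⟨0, V.zero_mem, Lp.coeFn_zero _ _ _⟩

lemma AEMem.add (hf : AEMem V f) (hg : AEMem V g) : AEMem V (f + g) :=
  let ⟨F, hFV, hF⟩ := hf
  let ⟨G, hGV, hG⟩ := hg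
  ⟨F + G, V.add_mem hFV hGV, (Lp.coeFn_add F G).trans (hF.add hG)⟩

lemma AEMem.sub (hf : AEMem V f) (hg : AEMem V g) : AEMem V (f - g) :=
  let ⟨F, hFV, hF⟩ := hf
  let ⟨G, hGV, hG⟩ := hg
  ⟨F - G, V.sub_mem hFV hGV, (Lp.coeFn_sub F G).trans (hF.sub hG)⟩

lemma AEMem.const_smul (c : ℂ) (hf : AEMem V f) : AEMem V (c • f) :=
  let ⟨F, hFV, hF⟩ := hf
  ⟨c • F, V.smul_mem c hFV, (Lp.coeFn_smul c F).trans (hF.const_smul c)⟩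

lemma AEMem.of_forall_eLpNorm_sub_le [Fact (1 ≤ q)] (hV : IsClosed (V : Set (Lp ℂ q μ)))
    (hf : MemLp f q μ)
    (h : ∀ ε : ℝ, 0 < ε → ∃ f', AEMem V f' ∧ eLpNorm (f - f') q μ ≤ ENNReal.ofReal ε) :
    AEMem V f := by
  refine ⟨hf.toLp f, ?_, hf.coeFn_toLp⟩
  rw [← SetLike.mem_coe, ← hV.closure_eq, EMetric.mem_closure_iff]
  intro ε hε
  obtain ⟨r, -, hr, hrε⟩ := ENNReal.lt_iff_exists_real_btwn.mp hε
  obtain ⟨f', ⟨F, hFV, hF⟩, hclose⟩ := h r (ENNReal.ofReal_pos.mp hr)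
  refine ⟨F, hFV, lt_of_le_of_lt ?_ hrε⟩
  rwa [Lp.edist_def, eLpNorm_congr_ae (hf.coeFn_toLp.sub hF)]

end AEMem

theorem tendsto_eLpNorm_of_dominated_s9 {μ : Measure X} {q : ℝ≥0∞} (hq : q ≠ ∞)
    {E : Type*} [NormedAddCommGroup E] {F : ℕ → X → E} (hF : ∀ n, AEStronglyMeasurable (F n) μ)
    {bound : X → ℝ} (h_bound : MemLp bound q μ) (h_le : ∀ n, ∀ᵐ x ∂μ, ‖F n x‖ ≤ bound x)
    (h_lim : ∀ᵐ x ∂μ, Tendsto (fun n => F n x) atTop (𝓝 0)) :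
    Tendsto (fun n => eLpNorm (F n) q μ) atTop (𝓝 0) := by
  rcases eq_or_ne q 0 with rfl | hq0
  · simp
  have hq_pos : 0 < q.toReal := ENNReal.toReal_pos hq0 hq
  simp only [eLpNorm_eq_lintegral_rpow_enorm_toReal hq0 hq]
  have h_int : Tendsto (fun n => ∫⁻ x, ‖F n x‖ₑ ^ q.toReal ∂μ) atTop (𝓝 0) := by
    simpa using tendsto_lintegral_of_dominated_convergence' (f := 0)
      (fun x => ‖bound x‖ₑ ^ q.toReal)
      (fun n => (hF n).enorm.pow_const _)
      (fun n => (h_le n).mono fun x hx => ENNReal.rpow_le_rpow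
        (enorm_le_iff_norm_le.mpr (hx.trans (Real.le_norm_self _))) hq_pos.le)
      (lintegral_rpow_enorm_lt_top_of_eLpNorm_lt_top hq0 hq h_bound.eLpNorm_lt_top).ne
      (h_lim.mono fun x hx => by
        simpa [Function.comp_def, ENNReal.zero_rpow_of_pos hq_pos] using
          ((ENNReal.continuous_rpow_const (y := q.toReal)).tendsto ‖(0 : E)‖ₑ).comp
            ((continuous_enorm.tendsto 0).comp hx))
  simpa [Function.comp_def, ENNReal.zero_rpow_of_pos (inv_pos.mpr hq_pos)] using
    ((ENNReal.continuous_rpow_const (y := 1 / q.toReal)).tendsto 0).comp h_int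

lemma norm_indicator_sub_indicator_le {α : Type*} (A B : Set α) (w : α → ℂ) (t : α) :
    ‖A.indicator w t - B.indicator w t‖ ≤ ‖(A ∆ B).indicator w t‖ := by
  by_cases hA : t ∈ A <;> by_cases hB : t ∈ B <;> simp [hA, hB, mem_symmDiff]

section Density

variable {μ : Measure X} {q : ℝ≥0∞} {V : Submodule ℂ (Lp ℂ q μ)} {D : Set (X → ℂ)}

lemma aeMem_simpleFunc_mul {g : X → ℂ} (h : ∀ A, MeasurableSet A → AEMem V (A.indicator g))
    (σ : SimpleFunc X ℂ) : AEMem V (⇑σ * g) := by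
  induction σ using SimpleFunc.induction with
  | @const c s hs =>
    refine ((h _ hs).const_smul c).congr (.of_eq ?_)
    ext t
    by_cases ht : t ∈ s <;> simp [ht]
  | add _ h₁ h₂ => simpa [add_mul] using h₁.add h₂

variable [Fact (1 ≤ q)]

/-- Multiplying `g` by simple approximations of `g⁻¹` (recall `0⁻¹ = 0`) yields the indicator of
its support, with domination by `3` on the support. -/
theorem aeMem_indicator_support (hV : IsClosed (V : Set (Lp ℂ q μ))) (hq : q ≠ ∞) {g : X → ℂ}
    (hg : Measurable g) (hgs : μ (support g) < ∞)
    (h : ∀ A, MeasurableSet A → AEMem V (A.indicator g)) :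
    AEMem V ((support g).indicator fun _ => (1 : ℂ)) := by
  have hS : MeasurableSet (support g) := measurableSet_support hg
  let σ n := SimpleFunc.approxOn (fun t => (g t)⁻¹) hg.inv univ 0 (mem_univ 0) n
  have h_le : ∀ n t, ‖(support g).indicator (fun _ => (1 : ℂ)) t - σ n t * g t‖
      ≤ (support g).indicator (fun _ => (3 : ℝ)) t := by
    intro n t
    by_cases ht : g t = 0
    · simp [ht]
    calc ‖(support g).indicator (fun _ => (1 : ℂ)) t - σ n t * g t‖
        ≤ 1 + ‖σ n t‖ * ‖g t‖ := by simpa [ht] using norm_sub_le (1 : ℂ) (σ n t * g t)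
      _ ≤ 1 + (‖(g t)⁻¹‖ + ‖(g t)⁻¹‖) * ‖g t‖ := by
        gcongr
        exact SimpleFunc.norm_approxOn_zero_le _ _ t n
      _ = (support g).indicator (fun _ => (3 : ℝ)) t := by
        simp [ht]
        field_simp
        norm_num
  have h_lim : ∀ t, Tendsto (fun n => (support g).indicator (fun _ => (1 : ℂ)) t - σ n t * g t)
      atTop (𝓝 0) := by
    intro t
    by_cases ht : g t = 0
    · simp [ht]
    have hσ : Tendsto (fun n => σ n t) atTop (𝓝 (g t)⁻¹) :=
      SimpleFunc.tendsto_approxOn hg.inv (mem_univ 0) (by simp)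
    simpa [ht] using (tendsto_const_nhds (x := (1 : ℂ))).sub (hσ.mul_const (g t))
  have h_tendsto := tendsto_eLpNorm_of_dominated_s9 hq
    (fun n => ((memLp_indicator_const q hS (1 : ℂ) (.inr hgs.ne)).aestronglyMeasurable.sub
      ((σ n).aestronglyMeasurable.mul hg.aestronglyMeasurable)))
    (memLp_indicator_const q hS (3 : ℝ) (.inr hgs.ne))
    (fun n => .of_forall (h_le n)) (.of_forall h_lim)
  refine .of_forall_eLpNorm_sub_le hV (memLp_indicator_const q hS 1 (.inr hgs.ne)) fun ε hε => ?_
  obtain ⟨n, hn⟩ := (h_tendsto.eventually_lt_const (ENNReal.ofReal_pos.mpr hε)).exists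
  exact ⟨_, aeMem_simpleFunc_mul h (σ n), hn.le⟩

theorem aeMem_indicator_of_supportUnionsDense (hV : IsClosed (V : Set (Lp ℂ q μ)))
    (hD : IsSimple μ D) (hdense : SupportUnionsDense μ D) {w : X → ℂ}
    (hw : ∀ A, MeasurableSet A → μ A < ∞ → MemLp (A.indicator w) q μ)
    (hw_small : ∀ ε : ℝ, 0 < ε → ∃ δ : ℝ, 0 < δ ∧ ∀ E, MeasurableSet E →
      μ E ≤ ENNReal.ofReal δ → eLpNorm (E.indicator w) q μ ≤ ENNReal.ofReal ε)
    (hsupp : ∀ h ∈ D, μ (support h) < ∞ → AEMem V ((support h).indicator w))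
    {A : Set X} (hA : MeasurableSet A) (hAfin : μ A < ∞) : AEMem V (A.indicator w) := by
  refine .of_forall_eLpNorm_sub_le hV (hw A hA hAfin) fun ε hε => ?_
  obtain ⟨δ, hδ, hsmall⟩ := hw_small ε hε
  obtain ⟨n, h, hhD, hAU⟩ := hdense A hA hAfin δ hδ
  have hUfin : μ (⋃ i, support (h i)) < ∞ :=
    ((measure_ne_top_iff_of_symmDiff (hAU.trans ENNReal.ofReal_lt_top).ne).mp hAfin.ne).lt_top
  have hU : AEMem V ((⋃ i, support (h i)).indicator w) := by
    simpa using (hD.aeLaminar_support hhD).biUnion_induction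
      (P := fun B => AEMem V (B.indicator w)) (by rw [indicator_empty]; exact aeMem_zero)
      (fun B B' hBB' hB => hB.congr (indicator_ae_eq_of_ae_eq_set hBB'))
      (fun B B' hB hB' hBB' => ((hB.add hB').sub hBB').congr (.of_eq (funext fun t => by
        simp [← indicator_union_add_inter_apply w B B' t])))
      (fun i => hsupp _ (hhD i) ((measure_mono (subset_iUnion _ i)).trans_lt hUfin)) .univ
  refine ⟨_, hU, ?_⟩
  calc eLpNorm (A.indicator w - (⋃ i, support (h i)).indicator w) q μ
      ≤ eLpNorm ((toMeasurable μ (A ∆ ⋃ i, support (h i))).indicator w) q μ :=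
        eLpNorm_mono fun t => (norm_indicator_sub_indicator_le _ _ w t).trans
          (norm_indicator_le_of_subset (subset_toMeasurable _ _) _ _)
    _ ≤ ENNReal.ofReal ε :=
        hsmall _ (measurableSet_toMeasurable _ _) (by rw [measure_toMeasurable]; exact hAU.le)

theorem aeMem_indicator_of_mem (hV : IsClosed (V : Set (Lp ℂ q μ))) (hq : q ≠ ∞)
    (hDV : ∀ f ∈ D, AEMem V f) (hD : IsSimple μ D) (hdense : SupportUnionsDense μ D)
    {g : X → ℂ} (hg : g ∈ D) (hgs : μ (support g) < ∞)
    {A : Set X} (hA : MeasurableSet A) : AEMem V (A.indicator g) := by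
  have hgLp : MemLp g q μ := (hDV g hg).memLp
  have hsupp : ∀ h ∈ D, μ (support h) < ∞ → AEMem V ((support h).indicator g) := by
    intro h hh _
    rcases hD.trichotomy hh hg with hhg | hgh | hdisj
    · exact (hDV h hh).congr hhg.indicator_support_ae_eq.symm
    · exact (hDV g hg).congr hgh.indicator_support_ae_eq_self.symm
    · exact aeMem_zero.congr (indicator_support_ae_eq_zero_of_mul hdisj).symm
  have hT : A.indicator g = (A ∩ toMeasurable μ (support g)).indicator g := by
    rw [← indicator_inter_support (A ∩ _), inter_assoc,
      inter_eq_right.mpr (subset_toMeasurable μ (support g)), indicator_inter_support]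
  rw [hT]
  exact aeMem_indicator_of_supportUnionsDense hV hD hdense (fun B hB _ => hgLp.indicator hB)
    (fun ε hε => let ⟨δ, hδ, h⟩ := hgLp.eLpNorm_indicator_le Fact.out hq hε; ⟨δ, hδ, h⟩) hsupp
    (hA.inter (measurableSet_toMeasurable _ _))
    ((measure_mono inter_subset_right).trans_lt (by rwa [measure_toMeasurable]))

theorem aeMem_indicator_one (hV : IsClosed (V : Set (Lp ℂ q μ))) (hq : q ≠ ∞)
    (hDV : ∀ f ∈ D, AEMem V f) (hD : IsSimple μ D) (hdense : SupportUnionsDense μ D)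
    {A : Set X} (hA : MeasurableSet A) (hAfin : μ A < ∞) :
    AEMem V (A.indicator fun _ => (1 : ℂ)) := by
  have hq0 : q ≠ 0 := (zero_lt_one.trans_le Fact.out).ne'
  refine aeMem_indicator_of_supportUnionsDense hV hD hdense
    (fun B hB hBfin => memLp_indicator_const q hB 1 (.inr hBfin.ne)) (fun ε hε => ?_)
    (fun h hh hhs => ?_) hA hAfin
  · refine ⟨ε ^ q.toReal, by positivity, fun E hE hEδ => ?_⟩
    have hq_pos : 0 < q.toReal := ENNReal.toReal_pos hq0 hq
    calc eLpNorm (E.indicator fun _ => (1 : ℂ)) q μ = μ E ^ (1 / q.toReal) := by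
          simp [eLpNorm_indicator_const hE hq0 hq]
      _ ≤ ENNReal.ofReal (ε ^ q.toReal) ^ (1 / q.toReal) := by gcongr
      _ = ENNReal.ofReal ε := by
          rw [ENNReal.ofReal_rpow_of_nonneg (by positivity) (by positivity), one_div,
            Real.rpow_rpow_inv hε.le hq_pos.ne']
  · have hmeas := (hDV h hh).memLp.aestronglyMeasurable
    have hsupp : support hmeas.mk =ᵐ[μ] support h := by
      rw [eventuallyEq_set]
      filter_upwards [hmeas.ae_eq_mk] with t ht
      simp [ht]
    refine (aeMem_indicator_support hV hq hmeas.stronglyMeasurable_mk.measurable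
      (by rwa [measure_congr hsupp]) fun B hB => ?_).congr (indicator_ae_eq_of_ae_eq_set hsupp)
    exact (aeMem_indicator_of_mem hV hq hDV hD hdense hh hhs hB).congr
      hmeas.ae_eq_mk.indicator

theorem aeMem_of_memLp (hV : IsClosed (V : Set (Lp ℂ q μ))) (hq : q ≠ ∞)
    (hDV : ∀ f ∈ D, AEMem V f) (hD : IsSimple μ D) (hdense : SupportUnionsDense μ D)
    {f : X → ℂ} (hf : MemLp f q μ) : AEMem V f := by
  refine MemLp.induction hq (motive := AEMem V) (fun c s hs hμs => ?_)
    (fun _ _ _ _ _ hf hg => hf.add hg) ?_ (fun _ _ hfg _ hf => hf.congr hfg) hf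
  · refine ((aeMem_indicator_one hV hq hDV hD hdense hs hμs).const_smul c).congr (.of_eq ?_)
    ext t
    by_cases ht : t ∈ s <;> simp [ht]
  · simpa only [aeMem_coeFn_iff, SetLike.setOfPred_mem_eq] using hV

end Density

theorem exists_sum_eLpNorm_sub_lt {μ : Measure X} {q : ℝ≥0∞} [Fact (1 ≤ q)] {D : Set (X → ℂ)}
    {f : X → ℂ}
    (hf : AEMem (Submodule.span ℂ {F : Lp ℂ q μ | ∃ g ∈ D, F =ᵐ[μ] g}).topologicalClosure f)
    {ε : ℝ≥0∞} (hε : 0 < ε) :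
    ∃ (n : ℕ) (c : Fin n → ℂ) (g : Fin n → (X → ℂ)), (∀ i, g i ∈ D) ∧
      eLpNorm (fun t => f t - ∑ i, c i * g i t) q μ < ε := by
  obtain ⟨F, hF, hFf⟩ := hf
  rw [← SetLike.mem_coe, Submodule.topologicalClosure_coe] at hF
  obtain ⟨G, hG, hFG⟩ := EMetric.mem_closure_iff.mp hF ε hε
  obtain ⟨n, c, e, rfl⟩ := Submodule.mem_span_set'.mp hG
  choose g hgD hge using fun i => (e i).2
  refine ⟨n, c, g, hgD, ?_⟩
  rw [Lp.edist_def] at hFG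
  refine (eLpNorm_congr_ae ?_).trans_lt hFG
  filter_upwards [hFf, Lp.coeFn_fun_finsetSum Finset.univ fun i => c i • (e i : Lp ℂ q μ),
    ae_all_iff.mpr fun i => Lp.coeFn_smul (c i) (e i : Lp ℂ q μ), ae_all_iff.mpr hge]
    with t h₁ h₂ h₃ h₄
  rw [Pi.sub_apply, h₁, h₂]
  simp [h₃, h₄]

theorem stmt9_general (μ : Measure X) (p : ℝ) (hp : 1 ≤ p) (D : Set (X → ℂ))
    (hmem : ∀ f ∈ D, MemLp f (ENNReal.ofReal p) μ)
    -- `D` is simple: incomparable elements are disjointly supported: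
    (hsimple : ∀ f ∈ D, ∀ g ∈ D, ¬ Subvec μ f g → ¬ Subvec μ g f →
      ∀ᵐ t ∂μ, f t * g t = 0)
    -- the upper semilattice generated by the supports of members of `D` is dense:
    (hdense : ∀ A : Set X, MeasurableSet A → μ A < ⊤ → ∀ ε : ℝ, 0 < ε →
      ∃ (n : ℕ) (g : Fin n → (X → ℂ)), (∀ i, g i ∈ D) ∧
        μ (A ∆ (⋃ i, Function.support (g i))) < ENNReal.ofReal ε) :
    -- conclusion: the linear span of `D` is dense in `L^p(Ω)`:
    ∀ f : X → ℂ, MemLp f (ENNReal.ofReal p) μ → ∀ ε : ℝ, 0 < ε →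
      ∃ (n : ℕ) (c : Fin n → ℂ) (g : Fin n → (X → ℂ)), (∀ i, g i ∈ D) ∧
        eLpNorm (fun t => f t - ∑ i, c i * g i t) (ENNReal.ofReal p) μ
          < ENNReal.ofReal ε := by
  intro f hf ε hε
  have : Fact (1 ≤ ENNReal.ofReal p) := ⟨ENNReal.one_le_ofReal.mpr hp⟩
  let S := Submodule.span ℂ {F : Lp ℂ (ENNReal.ofReal p) μ | ∃ g ∈ D, F =ᵐ[μ] g}
  have hDV : ∀ g ∈ D, AEMem S.topologicalClosure g := fun g hg =>
    ⟨(hmem g hg).toLp g, S.le_topologicalClosure (Submodule.subset_span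
      ⟨g, hg, (hmem g hg).coeFn_toLp⟩), (hmem g hg).coeFn_toLp⟩
  exact exists_sum_eLpNorm_sub_lt (aeMem_of_memLp S.isClosed_topologicalClosure
    ENNReal.ofReal_ne_top hDV hsimple hdense hf) (ENNReal.ofReal_pos.mpr hε)

theorem stmt9 (μ : Measure X) (p : ℝ) (hp : 1 ≤ p) (D : Set (X → ℂ))
    (hmem : ∀ f ∈ D, MemLp f (ENNReal.ofReal p) μ)
    -- `D` is a lower semilattice under the subvector order:
    (hlat : ∀ f ∈ D, ∀ g ∈ D, ∃ h ∈ D, Subvec μ h f ∧ Subvec μ h g ∧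
      ∀ k ∈ D, Subvec μ k f → Subvec μ k g → Subvec μ k h)
    -- `D` is simple: incomparable elements are disjointly supported:
    (hsimple : ∀ f ∈ D, ∀ g ∈ D, ¬ Subvec μ f g → ¬ Subvec μ g f →
      ∀ᵐ t ∂μ, f t * g t = 0)
    -- the upper semilattice generated by the supports of members of `D` is dense:
    (hdense : ∀ A : Set X, MeasurableSet A → μ A < ⊤ → ∀ ε : ℝ, 0 < ε →
      ∃ (n : ℕ) (g : Fin n → (X → ℂ)), (∀ i, g i ∈ D) ∧
        μ (A ∆ (⋃ i, Function.support (g i))) < ENNReal.ofReal ε) :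
    -- conclusion: the linear span of `D` is dense in `L^p(Ω)`:
    ∀ f : X → ℂ, MemLp f (ENNReal.ofReal p) μ → ∀ ε : ℝ, 0 < ε →
      ∃ (n : ℕ) (c : Fin n → ℂ) (g : Fin n → (X → ℂ)), (∀ i, g i ∈ D) ∧
        eLpNorm (fun t => f t - ∑ i, c i * g i t) (ENNReal.ofReal p) μ
          < ENNReal.ofReal ε :=
  stmt9_general μ p hp D hmem hsimple hdense
end

section
/- Let Ω be a measure space and let D be a finite simple lower semilattice of measurable sets (ordered by inclusion modulo null sets). Then for every measurable set A not in the upper semilattice generated by D, there is a finite simple lower semilattice D′ of measurable sets properly extending D such that A belongs to the upper semilattice generated by D′ (i.e., A is a finite union of elements of D′). -/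
open MeasureTheory Set
open scoped symmDiff

variable {X : Type*} [MeasurableSpace X]

/-- Inclusion of sets modulo `μ`-null sets. -/
def SetLeAE (μ : Measure X) (s t : Set X) : Prop := μ (s \ t) = 0

/-- A finite family of measurable sets is a simple lower semilattice (under
inclusion modulo null sets) when any two incomparable members have null
intersection. -/
def SimpleLat (μ : Measure X) (D : Finset (Set X)) : Prop :=
  ∀ s ∈ D, ∀ t ∈ D, ¬ SetLeAE μ s t → ¬ SetLeAE μ t s → μ (s ∩ t) = 0

/-- `A` belongs to the upper semilattice generated by `D`: modulo null sets,
`A` is a finite union of members of `D`. -/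
def InUpperGen (μ : Measure X) (D : Finset (Set X)) (A : Set X) : Prop :=
  ∃ F ⊆ D, μ (A ∆ (⋃₀ (F : Set (Set X)))) = 0

lemma setLeAE_refl (μ : Measure X) (s : Set X) : SetLeAE μ s s := by
  simp [SetLeAE]

lemma setLeAE_trans {μ : Measure X} {s t w : Set X}
    (h1 : SetLeAE μ s t) (h2 : SetLeAE μ t w) : SetLeAE μ s w := by
  refine measure_mono_null (fun x hx => ?_) (measure_union_null h1 h2)
  by_cases hxt : x ∈ t
  · exact Or.inr ⟨hxt, hx.2⟩
  · exact Or.inl ⟨hx.1, hxt⟩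

lemma setLeAE_of_subset {μ : Measure X} {s t : Set X} (h : s ⊆ t) : SetLeAE μ s t := by
  simp [SetLeAE, Set.diff_eq_empty.mpr h]

open scoped Classical in
/-- The elements of `D` strictly below `d` modulo null sets. -/
noncomputable def Bfx (μ : Measure X) (D : Finset (Set X)) (d : Set X) : Finset (Set X) :=
  D.filter (fun e => SetLeAE μ e d ∧ ¬ SetLeAE μ d e)

lemma mem_Bfx {μ : Measure X} {D : Finset (Set X)} {d e : Set X} :
    e ∈ Bfx μ D d ↔ e ∈ D ∧ SetLeAE μ e d ∧ ¬ SetLeAE μ d e := by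
  classical
  simp [Bfx]

/-- The part of `A ∩ d` not covered by elements strictly below `d`. -/
noncomputable def ux (μ : Measure X) (D : Finset (Set X)) (A d : Set X) : Set X :=
  (A ∩ d) \ ⋃₀ ↑(Bfx μ D d)

lemma ux_subset {μ : Measure X} {D : Finset (Set X)} {A d : Set X} :
    ux μ D A d ⊆ A ∩ d := Set.diff_subset

lemma Bfx_congr {μ : Measure X} {D : Finset (Set X)} {d d' : Set X}
    (h1 : SetLeAE μ d d') (h2 : SetLeAE μ d' d) : Bfx μ D d = Bfx μ D d' := by
  ext e
  simp only [mem_Bfx]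
  constructor
  · rintro ⟨he, hle, hnle⟩
    exact ⟨he, setLeAE_trans hle h1, fun hc => hnle (setLeAE_trans h1 hc)⟩
  · rintro ⟨he, hle, hnle⟩
    exact ⟨he, setLeAE_trans hle h2, fun hc => hnle (setLeAE_trans h2 hc)⟩

/-- Key pairwise lemma: `ux μ D A d` against an old element `t`. -/
lemma pair_ux_old {μ : Measure X} {D : Finset (Set X)} (hsimple : SimpleLat μ D)
    {A d t : Set X} (hd : d ∈ D) (ht : t ∈ D)
    (h1 : ¬ SetLeAE μ (ux μ D A d) t) :
    μ (ux μ D A d ∩ t) = 0 := by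
  by_cases hdt : SetLeAE μ d t
  · exact absurd (setLeAE_trans (setLeAE_of_subset (fun x hx => hx.1.2)) hdt) h1
  · by_cases htd : SetLeAE μ t d
    · have hE : ux μ D A d ∩ t = ∅ :=
        Set.eq_empty_iff_forall_notMem.mpr
          (fun x hx => hx.1.2 ⟨t, Finset.mem_coe.mpr (mem_Bfx.mpr ⟨ht, htd, hdt⟩), hx.2⟩)
      simp [hE]
    · exact measure_mono_null (fun x hx => (⟨hx.1.1.2, hx.2⟩ : x ∈ d ∩ t))
        (hsimple d hd t ht hdt htd)

/-- Key pairwise lemma: `ux μ D A d` against `ux μ D A d'`. -/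
lemma pair_ux_ux {μ : Measure X} {D : Finset (Set X)} (hsimple : SimpleLat μ D)
    {A d d' : Set X} (hd : d ∈ D) (hd' : d' ∈ D)
    (h1 : ¬ SetLeAE μ (ux μ D A d) (ux μ D A d')) :
    μ (ux μ D A d ∩ ux μ D A d') = 0 := by
  by_cases hdd' : SetLeAE μ d d'
  · by_cases hd'd : SetLeAE μ d' d
    · exfalso
      apply h1
      have hBeq : Bfx (D := D) μ d = Bfx μ D d' := Bfx_congr hdd' hd'd
      refine measure_mono_null (fun x hx => ?_) hdd'
      refine ⟨hx.1.1.2, fun hxd' => hx.2 ⟨⟨hx.1.1.1, hxd'⟩, ?_⟩⟩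
      rw [← hBeq]
      exact hx.1.2
    · have hE : ux μ D A d ∩ ux μ D A d' = ∅ :=
        Set.eq_empty_iff_forall_notMem.mpr (fun x hx =>
          hx.2.2 ⟨d, Finset.mem_coe.mpr (mem_Bfx.mpr ⟨hd, hdd', hd'd⟩), hx.1.1.2⟩)
      simp [hE]
  · by_cases hd'd : SetLeAE μ d' d
    · have hE : ux μ D A d ∩ ux μ D A d' = ∅ :=
        Set.eq_empty_iff_forall_notMem.mpr (fun x hx =>
          hx.1.2 ⟨d', Finset.mem_coe.mpr (mem_Bfx.mpr ⟨hd', hd'd, hdd'⟩), hx.2.1.2⟩)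
      simp [hE]
    · exact measure_mono_null (fun x hx => (⟨hx.1.1.2, hx.2.1.2⟩ : x ∈ d ∩ d'))
        (hsimple d hd d' hd' hdd' hd'd)

theorem stmt10 (μ : Measure X) (D : Finset (Set X))
    (hmeas : ∀ s ∈ D, MeasurableSet s) (hsimple : SimpleLat μ D)
    (A : Set X) (hA : MeasurableSet A) (hnot : ¬ InUpperGen μ D A) :
    ∃ D' : Finset (Set X), (∀ s ∈ D', MeasurableSet s) ∧ SimpleLat μ D' ∧
      -- `D'` properly extends `D`:
      D ⊂ D' ∧
      (∀ u ∈ D', u ∉ D → ∀ v ∈ D, μ v ≠ 0 →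
        ¬ (SetLeAE μ v u ∧ ¬ SetLeAE μ u v)) ∧
      InUpperGen μ D' A := by
  classical
  set uinf : Set X := A \ ⋃₀ ↑D with huinf
  set F : Finset (Set X) := insert uinf (D.image (ux μ D A)) with hF
  set D' : Finset (Set X) := D ∪ F with hD'
  -- membership characterization
  have hmem : ∀ s, s ∈ D' → s ∈ D ∨ s = uinf ∨ ∃ d ∈ D, ux μ D A d = s := by
    intro s hs
    rw [hD', Finset.mem_union, hF, Finset.mem_insert, Finset.mem_image] at hs
    tauto
  have huxF : ∀ d ∈ D, ux μ D A d ∈ (F : Set (Set X)) := by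
    intro d hd
    exact Finset.mem_coe.mpr (Finset.mem_insert_of_mem (Finset.mem_image_of_mem _ hd))
  have huinfF : uinf ∈ (F : Set (Set X)) := Finset.mem_coe.mpr (Finset.mem_insert_self _ _)
  -- every element of F is a subset of A
  have hFsubA : ∀ t ∈ (F : Set (Set X)), t ⊆ A := by
    intro t ht
    rcases Finset.mem_insert.mp (Finset.mem_coe.mp ht) with rfl | ht'
    · exact Set.diff_subset
    · obtain ⟨d, _, rfl⟩ := Finset.mem_image.mp ht'
      exact fun x hx => (ux_subset hx).1
  -- key covering lemma by induction on the number of elements strictly below d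
  have key : ∀ n : ℕ, ∀ d ∈ D, (Bfx μ D d).card ≤ n →
      μ ((A ∩ d) \ ⋃₀ ↑F) = 0 := by
    intro n
    induction n with
    | zero =>
      intro d hd hcard
      have hBe : Bfx μ D d = ∅ := Finset.card_eq_zero.mp (Nat.le_zero.mp hcard)
      refine measure_mono_null (fun x hx => ?_) (measure_empty (μ := μ))
      exact (hx.2 ⟨ux μ D A d, huxF d hd, hx.1, by simp [ux, hBe]⟩).elim
    | succ n ih =>
      intro d hd hcard
      have hsub : (A ∩ d) \ ⋃₀ ↑F ⊆ ⋃ e ∈ (↑(Bfx μ D d) : Set (Set X)), ((A ∩ e) \ ⋃₀ ↑F) := by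
        intro x hx
        have hxu : x ∉ ux μ D A d := fun hxu => hx.2 ⟨ux μ D A d, huxF d hd, hxu⟩
        have hxB : x ∈ ⋃₀ ↑(Bfx μ D d) := by
          by_contra hc
          exact hxu ⟨hx.1, hc⟩
        obtain ⟨e, heB, hxe⟩ := hxB
        exact Set.mem_biUnion heB ⟨⟨hx.1.1, hxe⟩, hx.2⟩
      refine measure_mono_null hsub ?_
      rw [measure_biUnion_null_iff (Bfx μ D d).countable_toSet]
      intro e heB
      have heB' : e ∈ Bfx μ D d := Finset.mem_coe.mp heB
      have he := mem_Bfx.mp heB'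
      apply ih e he.1
      have hsubB : Bfx μ D e ⊆ (Bfx μ D d).erase e := by
        intro f hf
        have hf' := mem_Bfx.mp hf
        refine Finset.mem_erase.mpr ⟨?_, mem_Bfx.mpr
          ⟨hf'.1, setLeAE_trans hf'.2.1 he.2.1,
            fun hc => he.2.2 (setLeAE_trans hc hf'.2.1)⟩⟩
        rintro rfl
        exact hf'.2.2 (setLeAE_refl μ f)
      have h1 : (Bfx μ D e).card ≤ ((Bfx μ D d).erase e).card :=
        Finset.card_le_card hsubB
      have h2 : ((Bfx μ D d).erase e).card = (Bfx μ D d).card - 1 :=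
        Finset.card_erase_of_mem heB'
      omega
  -- A agrees with the union of F modulo null sets
  have hAF : μ (A ∆ (⋃₀ (F : Set (Set X)))) = 0 := by
    rw [Set.symmDiff_def]
    refine measure_union_null ?_ ?_
    · have hcov : A \ ⋃₀ ↑F ⊆ ⋃ d ∈ (D : Set (Set X)), ((A ∩ d) \ ⋃₀ ↑F) := by
        intro x hx
        have hxuinf : x ∉ uinf := fun hxu => hx.2 ⟨uinf, huinfF, hxu⟩
        have hxD : x ∈ ⋃₀ (D : Set (Set X)) := by
          by_contra hc
          exact hxuinf ⟨hx.1, hc⟩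
        obtain ⟨d, hdD, hxd⟩ := hxD
        exact Set.mem_biUnion hdD ⟨⟨hx.1, hxd⟩, hx.2⟩
      refine measure_mono_null hcov ?_
      rw [measure_biUnion_null_iff D.countable_toSet]
      intro d hd
      exact key (Bfx μ D d).card d (Finset.mem_coe.mp hd) le_rfl
    · refine measure_mono_null (fun x hx => ?_) (measure_empty (μ := μ))
      obtain ⟨⟨t, htF, hxt⟩, hxA⟩ := hx
      exact (hxA (hFsubA t htF hxt)).elim
  refine ⟨D', ?_, ?_, ?_, ?_, ⟨F, Finset.subset_union_right, hAF⟩⟩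
  · -- measurability
    intro s hs
    rcases hmem s hs with hsD | rfl | ⟨d, hd, rfl⟩
    · exact hmeas s hsD
    · exact hA.diff (MeasurableSet.sUnion D.countable_toSet (by exact_mod_cast hmeas))
    · refine (hA.inter (hmeas d hd)).diff
        (MeasurableSet.sUnion (Bfx μ D d).countable_toSet ?_)
      intro t ht
      exact hmeas t (mem_Bfx.mp (Finset.mem_coe.mp ht)).1
  · -- SimpleLat D'
    intro s hs t ht hst hts
    have huinf_inter : ∀ w : Set X, w ⊆ ⋃₀ (D : Set (Set X)) → μ (uinf ∩ w) = 0 := by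
      intro w hw
      refine measure_mono_null (fun x hx => (hx.1.2 (hw hx.2)).elim) (measure_empty (μ := μ))
    have hsubD : ∀ d ∈ D, ux μ D A d ⊆ ⋃₀ (D : Set (Set X)) :=
      fun d hd x hx => ⟨d, Finset.mem_coe.mpr hd, (ux_subset hx).2⟩
    have hsubD' : ∀ d ∈ D, (d : Set X) ⊆ ⋃₀ (D : Set (Set X)) :=
      fun d hd x hx => ⟨d, Finset.mem_coe.mpr hd, hx⟩
    rcases hmem s hs with hsD | rfl | ⟨d, hd, rfl⟩
    · rcases hmem t ht with htD | rfl | ⟨d', hd', rfl⟩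
      · exact hsimple s hsD t htD hst hts
      · rw [Set.inter_comm]
        exact huinf_inter s (hsubD' s hsD)
      · rw [Set.inter_comm]
        exact pair_ux_old hsimple hd' hsD hts
    · rcases hmem t ht with htD | rfl | ⟨d', hd', rfl⟩
      · exact huinf_inter t (hsubD' t htD)
      · exact absurd (setLeAE_refl μ uinf) hst
      · exact huinf_inter _ (hsubD d' hd')
    · rcases hmem t ht with htD | rfl | ⟨d', hd', rfl⟩
      · exact pair_ux_old hsimple hd htD hst
      · rw [Set.inter_comm]
        exact huinf_inter _ (hsubD d hd)
      · exact pair_ux_ux hsimple hd hd' hst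
  · -- D ⊂ D'
    refine Finset.ssubset_iff_subset_ne.mpr ⟨Finset.subset_union_left, fun h => ?_⟩
    exact hnot ⟨F, by rw [h]; exact Finset.subset_union_right, hAF⟩
  · -- proper extension: no new element strictly contains a nonzero old element
    intro w hw hwD v hv hvpos hcon
    obtain ⟨hle_vw, hnle_wv⟩ := hcon
    have hwF : w = uinf ∨ ∃ d ∈ D, ux μ D A d = w := by
      rcases hmem w hw with h | h | h
      · exact absurd h hwD
      · exact Or.inl h
      · exact Or.inr h
    rcases hwF with rfl | ⟨d, hd, rfl⟩
    · apply hvpos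
      refine measure_mono_null (fun x hx => ?_) hle_vw
      exact ⟨hx, fun hxu => hxu.2 ⟨v, Finset.mem_coe.mpr hv, hx⟩⟩
    · by_cases h1 : SetLeAE μ d v
      · exact hnle_wv (setLeAE_trans (setLeAE_of_subset (fun x hx => (ux_subset hx).2)) h1)
      · by_cases h2 : SetLeAE μ v d
        · apply hvpos
          refine measure_mono_null (fun x hx => ?_) hle_vw
          refine ⟨hx, fun hxu => hxu.2 ⟨v, ?_, hx⟩⟩
          exact Finset.mem_coe.mpr (mem_Bfx.mpr ⟨hv, h2, h1⟩)
        · apply hvpos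
          have hnull := hsimple v hv d hd h2 h1
          refine measure_mono_null (fun x hx => ?_) (measure_union_null hnull hle_vw)
          by_cases hxd : x ∈ d
          · exact Or.inl ⟨hx, hxd⟩
          · exact Or.inr ⟨hx, fun hxu => hxd (ux_subset hxu).2⟩
end

section
/- Let φ : F → L^p(Ω) be a separating antitone map on a finite tree F, let γ_ν ∈ ℂ for ν ∈ F, and set g = Σ_{ν ∈ F} γ_ν φ(ν). Then ‖g‖_p^p = Σ_{ν ∈ F} |Σ_{μ ⊆ ν} γ_μ|^p · ‖∇_φ(ν)‖_p^p, where ∇_φ(ν) = φ(ν) − Σ_{ν′ child of ν in F} φ(ν′). -/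
/-!
Summation by parts along the tree rewrites `g = ∑ γ_ν φ(ν)` as `∑ c_ν ∇_φ(ν)`, where
`c_ν = ∑_{μ ⊆ ν} γ_μ`: the coefficient of `φ(ν)` on the right is `c_ν - c_{parent ν} = γ_ν`.
At almost every point, `φ` is antitone and separating for all pairs of nodes at once, and then at
most one `∇_φ(ν)` is nonzero there: on the support of a strict descendant of `ν`, exactly one child
of `ν` is nonzero and it agrees with `φ(ν)`, so `∇_φ(ν)` vanishes. Hence the `p`-th power of
`|g|` splits pointwise as `∑ |c_ν|^p |∇_φ(ν)|^p`, and integrating gives the formula.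
-/

open MeasureTheory Set
open scoped Classical ENNReal

/-- `ν'` is a child of `ν`. -/
def NodeChild (ν' ν : List ℕ) : Prop := ∃ n : ℕ, ν' = ν ++ [n]

noncomputable def branchSum {R : Type*} [AddCommMonoid R] (F : Finset (List ℕ)) (γ : List ℕ → R)
    (ν : List ℕ) : R :=
  ∑ μ' ∈ F.filter (fun μ' => μ' <+: ν), γ μ'

/-- At a point `t`, `treeGrad F (φ · t)` is the paper's `∇_φ` evaluated at `t`. -/
noncomputable def treeGrad {M : Type*} [AddCommGroup M] (F : Finset (List ℕ)) (f : List ℕ → M)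
    (ν : List ℕ) : M :=
  f ν - ∑ ν' ∈ F.filter (fun ν' => NodeChild ν' ν), f ν'

def TreeAntitone {M : Type*} [Zero M] (F : Finset (List ℕ)) (f : List ℕ → M) : Prop :=
  ∀ ν ∈ F, ∀ ν' ∈ F, ν <+: ν' → f ν' ≠ 0 → f ν' = f ν

def TreeSeparating {M : Type*} [Zero M] (F : Finset (List ℕ)) (f : List ℕ → M) : Prop :=
  ∀ ν ∈ F, ∀ ν' ∈ F, ¬ ν <+: ν' → ¬ ν' <+: ν → f ν = 0 ∨ f ν' = 0

lemma NodeChild.isPrefix {ν' ν : List ℕ} (h : NodeChild ν' ν) : ν <+: ν' := by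
  obtain ⟨n, rfl⟩ := h
  exact List.prefix_append _ _

lemma NodeChild.length_eq {ν' ν : List ℕ} (h : NodeChild ν' ν) : ν'.length = ν.length + 1 := by
  obtain ⟨n, rfl⟩ := h
  simp

lemma NodeChild.not_isPrefix_of_ne {a b ν : List ℕ} (ha : NodeChild a ν) (hb : NodeChild b ν)
    (hab : a ≠ b) : ¬ a <+: b :=
  fun h => hab (h.eq_of_length (by rw [ha.length_eq, hb.length_eq]))

section Tree

variable {F : Finset (List ℕ)}

lemma filter_nodeChild_eq_parent (htree : ∀ ν ∈ F, ∀ μ' : List ℕ, μ' <+: ν → μ' ∈ F)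
    {ν' : List ℕ} (hν' : ν' ∈ F) :
    F.filter (fun ν => NodeChild ν' ν) = if ν' = [] then ∅ else {ν'.dropLast} := by
  ext ν
  simp only [Finset.mem_filter]
  constructor
  · rintro ⟨-, n, rfl⟩
    simp
  · split_ifs with h0
    · simp
    · rw [Finset.mem_singleton]
      rintro rfl
      have hd : ν'.dropLast ++ [ν'.getLast h0] = ν' := List.dropLast_append_getLast h0
      exact ⟨htree ν' hν' _ ⟨_, hd⟩, _, hd.symm⟩

lemma filter_isPrefix_eq_insert_dropLast {ν : List ℕ} (hν : ν ∈ F) (h0 : ν ≠ []) :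
    F.filter (fun μ' => μ' <+: ν) = insert ν (F.filter (fun μ' => μ' <+: ν.dropLast)) := by
  ext μ'
  simp only [Finset.mem_filter, Finset.mem_insert]
  constructor
  · rintro ⟨hμ', hpre⟩
    rw [← List.dropLast_append_getLast h0, List.prefix_concat_iff,
      List.dropLast_append_getLast h0] at hpre
    exact hpre.imp id (⟨hμ', ·⟩)
  · rintro (rfl | ⟨hμ', hpre⟩)
    · exact ⟨hν, List.prefix_refl _⟩
    · exact ⟨hμ', hpre.trans (List.dropLast_prefix ν)⟩

lemma branchSum_eq_add_sum_parent {R : Type*} [AddCommMonoid R]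
    (htree : ∀ ν ∈ F, ∀ μ' : List ℕ, μ' <+: ν → μ' ∈ F) (γ : List ℕ → R)
    {ν' : List ℕ} (hν' : ν' ∈ F) :
    branchSum F γ ν' = γ ν' + ∑ ν ∈ F.filter (fun ν => NodeChild ν' ν), branchSum F γ ν := by
  rw [filter_nodeChild_eq_parent htree hν']
  split_ifs with h0
  · subst h0
    have : F.filter (fun μ' => μ' <+: ([] : List ℕ)) = {[]} := by
      ext μ'
      simp only [Finset.mem_filter, List.prefix_nil, Finset.mem_singleton]
      exact ⟨And.right, fun h => ⟨h ▸ hν', h⟩⟩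
    rw [Finset.sum_empty, add_zero, branchSum, this, Finset.sum_singleton]
  · have hnotmem : ν' ∉ F.filter (fun μ' => μ' <+: ν'.dropLast) := fun h => by
      have := (Finset.mem_filter.mp h).2.length_le
      rw [List.length_dropLast] at this
      have := List.length_pos_iff.mpr h0
      omega
    rw [Finset.sum_singleton, branchSum, filter_isPrefix_eq_insert_dropLast hν' h0,
      Finset.sum_insert hnotmem]
    rfl

theorem sum_branchSum_mul_treeGrad {R : Type*} [Ring R]
    (htree : ∀ ν ∈ F, ∀ μ' : List ℕ, μ' <+: ν → μ' ∈ F) (γ f : List ℕ → R) :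
    ∑ ν ∈ F, branchSum F γ ν * treeGrad F f ν = ∑ ν ∈ F, γ ν * f ν := by
  have hswap : ∑ ν ∈ F, ∑ ν' ∈ F.filter (fun ν' => NodeChild ν' ν), branchSum F γ ν * f ν'
      = ∑ ν' ∈ F, (∑ ν ∈ F.filter (fun ν => NodeChild ν' ν), branchSum F γ ν) * f ν' := by
    simp only [Finset.sum_mul]
    refine Finset.sum_comm' fun ν ν' => ?_
    simp only [Finset.mem_filter]
    tauto
  calc ∑ ν ∈ F, branchSum F γ ν * treeGrad F f ν
      = ∑ ν ∈ F, branchSum F γ ν * f ν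
        - ∑ ν ∈ F, ∑ ν' ∈ F.filter (fun ν' => NodeChild ν' ν), branchSum F γ ν * f ν' := by
        simp only [treeGrad, mul_sub, Finset.mul_sum, Finset.sum_sub_distrib]
    _ = ∑ ν ∈ F, (branchSum F γ ν
          - ∑ ν' ∈ F.filter (fun ν' => NodeChild ν ν'), branchSum F γ ν') * f ν := by
        simp only [hswap, sub_mul, Finset.sum_sub_distrib]
    _ = ∑ ν ∈ F, γ ν * f ν := by
        refine Finset.sum_congr rfl fun ν hν => ?_
        rw [branchSum_eq_add_sum_parent htree γ hν, add_sub_cancel_right]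

variable {M : Type*} [AddCommGroup M] {f : List ℕ → M}

lemma treeGrad_eq_zero_of_eq_zero (hanti : TreeAntitone F f) {ν : List ℕ} (hν : ν ∈ F)
    (h0 : f ν = 0) : treeGrad F f ν = 0 := by
  refine sub_eq_zero.mpr ?_
  rw [h0, eq_comm]
  refine Finset.sum_eq_zero fun ν' hν' => ?_
  obtain ⟨hν'F, hchild⟩ := Finset.mem_filter.mp hν'
  by_contra hne
  exact hne ((hanti ν hν ν' hν'F hchild.isPrefix hne).trans h0)

lemma treeGrad_eq_zero_of_nodeChild (hanti : TreeAntitone F f) (hsep : TreeSeparating F f)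
    {ν c : List ℕ} (hν : ν ∈ F) (hc : c ∈ F) (hchild : NodeChild c ν) (hfc : f c ≠ 0) :
    treeGrad F f ν = 0 := by
  have hsum : ∑ ν' ∈ F.filter (fun ν' => NodeChild ν' ν), f ν' = f c := by
    refine Finset.sum_eq_single_of_mem c (Finset.mem_filter.mpr ⟨hc, hchild⟩) fun b hb hbc => ?_
    obtain ⟨hbF, hbchild⟩ := Finset.mem_filter.mp hb
    exact (hsep c hc b hbF (hchild.not_isPrefix_of_ne hbchild (Ne.symm hbc))
      (hbchild.not_isPrefix_of_ne hchild hbc)).resolve_left hfc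
  rw [treeGrad, hsum, hanti ν hν c hc hchild.isPrefix hfc, sub_self]

lemma treeGrad_eq_zero_of_isPrefix (htree : ∀ ν ∈ F, ∀ μ' : List ℕ, μ' <+: ν → μ' ∈ F)
    (hanti : TreeAntitone F f) (hsep : TreeSeparating F f) {ν ν' : List ℕ} (hν' : ν' ∈ F)
    (hpre : ν <+: ν') (hne : ν ≠ ν') (hfν' : f ν' ≠ 0) : treeGrad F f ν = 0 := by
  have hlen : ν.length < ν'.length :=
    lt_of_le_of_ne hpre.length_le fun h => hne (hpre.eq_of_length h)
  have hcpre := List.concat_get_prefix hpre hlen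
  have hc := htree ν' hν' _ hcpre
  refine treeGrad_eq_zero_of_nodeChild hanti hsep (htree ν' hν' ν hpre) hc ⟨_, rfl⟩ ?_
  rw [← hanti _ hc ν' hν' hcpre hfν']
  exact hfν'

theorem treeGrad_eq_zero_or_eq_zero (htree : ∀ ν ∈ F, ∀ μ' : List ℕ, μ' <+: ν → μ' ∈ F)
    (hanti : TreeAntitone F f) (hsep : TreeSeparating F f) {ν ν' : List ℕ} (hν : ν ∈ F)
    (hν' : ν' ∈ F) (hne : ν ≠ ν') : treeGrad F f ν = 0 ∨ treeGrad F f ν' = 0 := by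
  by_cases h1 : ν <+: ν'
  · by_cases hz : f ν' = 0
    · exact Or.inr (treeGrad_eq_zero_of_eq_zero hanti hν' hz)
    · exact Or.inl (treeGrad_eq_zero_of_isPrefix htree hanti hsep hν' h1 hne hz)
  by_cases h2 : ν' <+: ν
  · by_cases hz : f ν = 0
    · exact Or.inl (treeGrad_eq_zero_of_eq_zero hanti hν hz)
    · exact Or.inr (treeGrad_eq_zero_of_isPrefix htree hanti hsep hν h2 (Ne.symm hne) hz)
  · exact (hsep ν hν ν' hν' h1 h2).imp (treeGrad_eq_zero_of_eq_zero hanti hν)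
      (treeGrad_eq_zero_of_eq_zero hanti hν')

end Tree

lemma ofReal_norm_sum_rpow_of_pairwise {ι E : Type*} [NormedAddCommGroup E] {p : ℝ} (hp : p ≠ 0)
    {s : Finset ι} {z : ι → E} (hz : ∀ i ∈ s, ∀ j ∈ s, i ≠ j → z i = 0 ∨ z j = 0) :
    ENNReal.ofReal (‖∑ i ∈ s, z i‖ ^ p) = ∑ i ∈ s, ENNReal.ofReal (‖z i‖ ^ p) := by
  by_cases hall : ∀ i ∈ s, z i = 0
  · rw [Finset.sum_eq_zero hall,
      Finset.sum_eq_zero fun i hi => by simp [hall i hi, Real.zero_rpow hp]]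
    simp [Real.zero_rpow hp]
  obtain ⟨i, hi, hzi⟩ := not_forall₂.mp hall
  have hzero : ∀ j ∈ s, j ≠ i → z j = 0 := fun j hj hji => (hz j hj i hi hji).resolve_right hzi
  rw [Finset.sum_eq_single_of_mem i hi hzero, Finset.sum_eq_single_of_mem i hi fun j hj hji => by
    simp [hzero j hj hji, Real.zero_rpow hp]]

theorem lintegral_ofReal_norm_sum_rpow_of_ae_disjoint {X ι E : Type*} [MeasurableSpace X]
    {μ : Measure X} [NormedAddCommGroup E] [MeasurableSpace E] [OpensMeasurableSpace E]
    {p : ℝ} (hp : 0 < p) {s : Finset ι} {g : ι → X → E}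
    (hg : ∀ i ∈ s, AEMeasurable (g i) μ)
    (hdisj : ∀ᵐ t ∂μ, ∀ i ∈ s, ∀ j ∈ s, i ≠ j → g i t = 0 ∨ g j t = 0) :
    ∫⁻ t, ENNReal.ofReal (‖∑ i ∈ s, g i t‖ ^ p) ∂μ
      = ∑ i ∈ s, ∫⁻ t, ENNReal.ofReal (‖g i t‖ ^ p) ∂μ := by
  have hcont : Continuous fun z : E => ENNReal.ofReal (‖z‖ ^ p) :=
    ENNReal.continuous_ofReal.comp ((Real.continuous_rpow_const hp.le).comp continuous_norm)
  have hmeas : ∀ i ∈ s, AEMeasurable (fun t => ENNReal.ofReal (‖g i t‖ ^ p)) μ :=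
    fun i hi => hcont.measurable.comp_aemeasurable (hg i hi)
  rw [← lintegral_finsetSum' s hmeas]
  exact lintegral_congr_ae (hdisj.mono fun t ht => ofReal_norm_sum_rpow_of_pairwise hp.ne' ht)

lemma lintegral_ofReal_norm_const_mul_rpow {X 𝕜 : Type*} [MeasurableSpace X] {μ : Measure X}
    [NormedDivisionRing 𝕜] {p : ℝ} (c : 𝕜) (h : X → 𝕜) :
    ∫⁻ t, ENNReal.ofReal (‖c * h t‖ ^ p) ∂μ
      = ENNReal.ofReal (‖c‖ ^ p) * ∫⁻ t, ENNReal.ofReal (‖h t‖ ^ p) ∂μ := by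
  simp only [norm_mul, Real.mul_rpow (norm_nonneg _) (norm_nonneg _),
    ENNReal.ofReal_mul (Real.rpow_nonneg (norm_nonneg c) p)]
  exact lintegral_const_mul' _ _ ENNReal.ofReal_ne_top

theorem stmt13 {X : Type*} [MeasurableSpace X] (μ : Measure X) (p : ℝ) (hp : 1 ≤ p)
    (F : Finset (List ℕ)) (htree : ∀ ν ∈ F, ∀ μ' : List ℕ, μ' <+: ν → μ' ∈ F)
    (φ : List ℕ → X → ℂ) (hmeas : ∀ ν ∈ F, AEMeasurable (φ ν) μ)
    -- `φ` is antitone for the subvector order: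
    (hanti : ∀ ν ∈ F, ∀ ν' ∈ F, ν <+: ν' →
      ∀ᵐ t ∂μ, φ ν' t ≠ 0 → φ ν' t = φ ν t)
    -- `φ` is separating:
    (hsep : ∀ ν ∈ F, ∀ ν' ∈ F, ¬ ν <+: ν' → ¬ ν' <+: ν →
      ∀ᵐ t ∂μ, φ ν t * φ ν' t = 0)
    (γ : List ℕ → ℂ) :
    ∫⁻ t, ENNReal.ofReal (‖∑ ν ∈ F, γ ν * φ ν t‖ ^ p) ∂μ =
      ∑ ν ∈ F, ENNReal.ofReal
          (‖∑ μ' ∈ F.filter (fun μ' => μ' <+: ν), γ μ'‖ ^ p) *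
        ∫⁻ t, ENNReal.ofReal
          (‖φ ν t - ∑ ν' ∈ F.filter (fun ν' => NodeChild ν' ν), φ ν' t‖ ^ p) ∂μ := by
  have hanti_ae : ∀ᵐ t ∂μ, TreeAntitone F (φ · t) := by
    simpa only [TreeAntitone, Filter.eventually_all_finset, Filter.eventually_imp_distrib_left]
      using hanti
  have hsep_ae : ∀ᵐ t ∂μ, TreeSeparating F (φ · t) := by
    simpa only [TreeSeparating, Filter.eventually_all_finset, Filter.eventually_imp_distrib_left,
      ← mul_eq_zero] using hsep
  have hgrad_meas : ∀ ν ∈ F, AEMeasurable (fun t => branchSum F γ ν * treeGrad F (φ · t) ν) μ :=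
    fun ν hν => ((hmeas ν hν).sub (Finset.aemeasurable_fun_sum _ fun ν' hν' =>
      hmeas ν' (Finset.mem_filter.mp hν').1)).const_mul _
  calc ∫⁻ t, ENNReal.ofReal (‖∑ ν ∈ F, γ ν * φ ν t‖ ^ p) ∂μ
      = ∫⁻ t, ENNReal.ofReal (‖∑ ν ∈ F, branchSum F γ ν * treeGrad F (φ · t) ν‖ ^ p) ∂μ := by
        simp only [sum_branchSum_mul_treeGrad htree]
    _ = ∑ ν ∈ F, ∫⁻ t, ENNReal.ofReal (‖branchSum F γ ν * treeGrad F (φ · t) ν‖ ^ p) ∂μ := by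
        refine lintegral_ofReal_norm_sum_rpow_of_ae_disjoint (by linarith) hgrad_meas ?_
        filter_upwards [hanti_ae, hsep_ae] with t ha hs ν hν ν' hν' hne
        exact (treeGrad_eq_zero_or_eq_zero htree ha hs hν hν' hne).imp
          (fun h => by rw [h, mul_zero]) (fun h => by rw [h, mul_zero])
    _ = _ := by
        simp only [lintegral_ofReal_norm_const_mul_rpow]
        rfl
end
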